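/- arXiv:2509.01179 — 13 statements merged into one kernel-verified Lean document; each statement's English description precedes it below -/
import Mathlib

section
/- With h, H, h₀ and the associated scalar quantities as in the context, one has the identity |h²|² = |h₀²|² − 4·|H·h|² − 2·‖H‖²·|h|² + 4·⟨H·h, h²⟩ + 12·‖H‖⁴. -/
open scoped RealInnerProductSpace

/-- `|h²|² = |h₀²|² − 4|H·h|² − 2‖H‖²|h|² + 4⟨H·h, h²⟩ + 12‖H‖⁴` for a symmetric
`F`-valued 2-tensor `h` on a 4-dimensional index set, where `H` is the mean curvature
and `h₀` the trace-free part. -/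
theorem stmt_1 {F : Type*} [NormedAddCommGroup F] [InnerProductSpace ℝ F]
    (h : Fin 4 → Fin 4 → F) (hsymm : ∀ i j, h i j = h j i)
    (H : F) (hH : H = (1 / 4 : ℝ) • ∑ i : Fin 4, h i i)
    (h₀ : Fin 4 → Fin 4 → F)
    (hh₀ : ∀ i j, h₀ i j = h i j - if i = j then H else 0) :
    ∑ i : Fin 4, ∑ j : Fin 4, (∑ k : Fin 4, ⟪h i k, h k j⟫) ^ 2
      = (∑ i : Fin 4, ∑ j : Fin 4, (∑ k : Fin 4, ⟪h₀ i k, h₀ k j⟫) ^ 2)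
        - 4 * (∑ i : Fin 4, ∑ j : Fin 4, ⟪H, h i j⟫ ^ 2)
        - 2 * ‖H‖ ^ 2 * (∑ i : Fin 4, ∑ j : Fin 4, ‖h i j‖ ^ 2)
        + 4 * (∑ i : Fin 4, ∑ j : Fin 4, ⟪H, h i j⟫ * (∑ k : Fin 4, ⟪h i k, h k j⟫))
        + 12 * ‖H‖ ^ 4 := by
  have key : ∀ i j : Fin 4, (∑ k : Fin 4, ⟪h₀ i k, h₀ k j⟫)
      = (∑ k : Fin 4, ⟪h i k, h k j⟫) - 2 * ⟪H, h i j⟫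
        + (if i = j then ‖H‖ ^ 2 else 0) := by
    intro i j
    have step : ∀ k : Fin 4, ⟪h₀ i k, h₀ k j⟫
        = ⟪h i k, h k j⟫ - (if k = j then ⟪H, h i k⟫ else 0)
          - (if i = k then ⟪H, h k j⟫ else 0)
          + (if i = k then (if k = j then ‖H‖ ^ 2 else 0) else 0) := by
      intro k
      simp only [hh₀, inner_sub_left, inner_sub_right]
      rcases eq_or_ne i k with h1 | h1 <;> rcases eq_or_ne k j with h2 | h2 <;>
        subst_vars <;>
        simp [*, real_inner_comm, real_inner_self_eq_norm_sq] <;> ring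
    simp only [step]
    rw [Finset.sum_add_distrib, Finset.sum_sub_distrib, Finset.sum_sub_distrib]
    rw [Finset.sum_ite_eq' Finset.univ j (fun k => ⟪H, h i k⟫),
        Finset.sum_ite_eq Finset.univ i (fun k => ⟪H, h k j⟫),
        Finset.sum_ite_eq Finset.univ i (fun k => if k = j then ‖H‖ ^ 2 else 0)]
    simp [hsymm i j, real_inner_comm]
    ring
  have htr : ⟪H, h 0 0⟫ + ⟪H, h 1 1⟫ + ⟪H, h 2 2⟫ + ⟪H, h 3 3⟫ = 4 * ‖H‖ ^ 2 := by
    have e : ⟪H, H⟫ = (1 / 4 : ℝ) * (⟪H, h 0 0⟫ + ⟪H, h 1 1⟫ + ⟪H, h 2 2⟫ + ⟪H, h 3 3⟫) := by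
      nth_rewrite 2 [hH]
      rw [real_inner_smul_right, Fin.sum_univ_four, inner_add_right, inner_add_right,
        inner_add_right]
    rw [real_inner_self_eq_norm_sq] at e
    linarith
  simp only [key, Fin.sum_univ_four]
  simp only [Fin.reduceEq, reduceIte, if_true, if_false]
  simp only [show h 1 0 = h 0 1 from hsymm 1 0, show h 2 0 = h 0 2 from hsymm 2 0,
    show h 2 1 = h 1 2 from hsymm 2 1, show h 3 0 = h 0 3 from hsymm 3 0,
    show h 3 1 = h 1 3 from hsymm 3 1, show h 3 2 = h 2 3 from hsymm 3 2,
    show ∀ a b : Fin 4, ‖h a b‖ ^ 2 = ⟪h a b, h a b⟫ from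
      fun a b => (real_inner_self_eq_norm_sq _).symm]
  linear_combination (4 * ‖H‖ ^ 2) * htr
end

section
/- With h, H, h₀ and the associated scalar quantities as in the context, define the (extrinsic) Ricci tensor Ric i k := 4·⟪H, h i k⟫ − (h²) i k and |Ric|² := ∑_{i,k} (Ric i k)². Then 4·|Ric|² = −2·|h²|² − 8·⟨H·h, h²⟩ + 6·|h₀²|² + 40·|H·h|² − 12·‖H‖²·|h|² + 72·‖H‖⁴. -/
/-!
Write `A = h²` and `B = ⟪H, h⟫`. Expanding `h₀ = h - H·δ` gives `h₀² = A - 2B + ‖H‖²·δ`, and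
`tr A = |h|²` (symmetry of `h`), `tr B = 4‖H‖²` (definition of `H`). Hence
`|h₀²|² = |A - 2B|² + 2‖H‖²|h|² - 12‖H‖⁴`, and the identity reduces to the entrywise
`4(4B - A)² = -2A² - 8AB + 6(A - 2B)² + 40B²`.
-/

open scoped RealInnerProductSpace

open Finset

section SecondFundamentalForm

variable {ι F : Type*} [Fintype ι] [NormedAddCommGroup F] [InnerProductSpace ℝ F]

theorem sum_inner_sub_ite_inner_sub_ite [DecidableEq ι] (h : ι → ι → F) (H : F) (i j : ι) :
    ∑ k, ⟪h i k - (if i = k then H else 0), h k j - (if k = j then H else 0)⟫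
      = ∑ k, ⟪h i k, h k j⟫ - ⟪h i j, H⟫ - ⟪H, h i j⟫ + if i = j then ‖H‖ ^ 2 else 0 := by
  have hk : ∀ k, ⟪h i k - (if i = k then H else 0), h k j - (if k = j then H else 0)⟫
      = ⟪h i k, h k j⟫ - (if k = j then ⟪h i k, H⟫ else 0) - (if i = k then ⟪H, h k j⟫ else 0)
        + (if i = k then (if k = j then ‖H‖ ^ 2 else 0) else 0) := by
    intro k
    split_ifs <;>
      simp only [inner_sub_left, inner_sub_right, inner_zero_left, inner_zero_right,
        real_inner_self_eq_norm_sq] <;> ring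
  simp only [hk, sum_add_distrib, sum_sub_distrib, sum_ite_eq, sum_ite_eq', mem_univ, if_true]

theorem sum_sum_add_ite_sq [DecidableEq ι] (M : ι → ι → ℝ) (c : ℝ) :
    ∑ i, ∑ j, (M i j + if i = j then c else 0) ^ 2
      = ∑ i, ∑ j, M i j ^ 2 + 2 * c * ∑ i, M i i + Fintype.card ι * c ^ 2 := by
  have hij : ∀ i j, (M i j + if i = j then c else 0) ^ 2
      = M i j ^ 2 + if i = j then 2 * c * M i j + c ^ 2 else 0 := by
    intro i j
    split_ifs <;> ring
  simp only [hij, sum_add_distrib, sum_ite_eq, mem_univ, if_true, ← mul_sum, sum_const, card_univ,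
    nsmul_eq_mul]
  ring

theorem sum_inner_diag_eq_card_mul_norm_sq {h : ι → ι → F} {H : F}
    (hH : (Fintype.card ι : ℝ) • H = ∑ i, h i i) :
    ∑ i, ⟪H, h i i⟫ = Fintype.card ι * ‖H‖ ^ 2 := by
  rw [← inner_sum, ← hH, real_inner_smul_right, real_inner_self_eq_norm_sq]

theorem sum_sum_inner_transpose_of_symm {h : ι → ι → F} (hsymm : ∀ i j, h i j = h j i) :
    ∑ i, ∑ k, ⟪h i k, h k i⟫ = ∑ i, ∑ k, ‖h i k‖ ^ 2 := by
  simp only [← hsymm, real_inner_self_eq_norm_sq]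

end SecondFundamentalForm

/-- With the extrinsic Ricci tensor `Ric i k = 4⟪H, h i k⟫ − (h²) i k`, one has
`4|Ric|² = −2|h²|² − 8⟨H·h, h²⟩ + 6|h₀²|² + 40|H·h|² − 12‖H‖²|h|² + 72‖H‖⁴`. -/
theorem stmt_2 {F : Type*} [NormedAddCommGroup F] [InnerProductSpace ℝ F]
    (h : Fin 4 → Fin 4 → F) (hsymm : ∀ i j, h i j = h j i)
    (H : F) (hH : H = (1 / 4 : ℝ) • ∑ i : Fin 4, h i i)
    (h₀ : Fin 4 → Fin 4 → F)
    (hh₀ : ∀ i j, h₀ i j = h i j - if i = j then H else 0)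
    (h2 : Fin 4 → Fin 4 → ℝ)
    (hh2 : ∀ i j, h2 i j = ∑ k : Fin 4, ⟪h i k, h k j⟫)
    (Ric : Fin 4 → Fin 4 → ℝ)
    (hRic : ∀ i k, Ric i k = 4 * ⟪H, h i k⟫ - h2 i k) :
    4 * (∑ i : Fin 4, ∑ k : Fin 4, Ric i k ^ 2)
      = -2 * (∑ i : Fin 4, ∑ j : Fin 4, h2 i j ^ 2)
        - 8 * (∑ i : Fin 4, ∑ j : Fin 4, ⟪H, h i j⟫ * h2 i j)
        + 6 * (∑ i : Fin 4, ∑ j : Fin 4, (∑ k : Fin 4, ⟪h₀ i k, h₀ k j⟫) ^ 2)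
        + 40 * (∑ i : Fin 4, ∑ j : Fin 4, ⟪H, h i j⟫ ^ 2)
        - 12 * ‖H‖ ^ 2 * (∑ i : Fin 4, ∑ j : Fin 4, ‖h i j‖ ^ 2)
        + 72 * ‖H‖ ^ 4 := by
  have h₀_sq : ∀ i j, ∑ k, ⟪h₀ i k, h₀ k j⟫
      = (h2 i j - 2 * ⟪H, h i j⟫) + if i = j then ‖H‖ ^ 2 else 0 := by
    intro i j
    simp only [hh₀, sum_inner_sub_ite_inner_sub_ite, hh2, real_inner_comm H]
    ring
  have trace_h2 : ∑ i, h2 i i = ∑ i, ∑ j, ‖h i j‖ ^ 2 := by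
    simp only [hh2, sum_sum_inner_transpose_of_symm hsymm]
  have trace_Hh : ∑ i, ⟪H, h i i⟫ = 4 * ‖H‖ ^ 2 := by
    have hH' : (Fintype.card (Fin 4) : ℝ) • H = ∑ i, h i i := by
      rw [hH, smul_smul]; norm_num
    simpa only [Fintype.card_fin, Nat.cast_ofNat] using sum_inner_diag_eq_card_mul_norm_sq hH'
  have ric_sq : ∀ i j, 4 * Ric i j ^ 2 = -2 * h2 i j ^ 2 - 8 * (⟪H, h i j⟫ * h2 i j)
      + 6 * (h2 i j - 2 * ⟪H, h i j⟫) ^ 2 + 40 * ⟪H, h i j⟫ ^ 2 := by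
    intro i j
    rw [hRic]
    ring
  calc 4 * ∑ i, ∑ k, Ric i k ^ 2
      = -2 * ∑ i, ∑ j, h2 i j ^ 2 - 8 * ∑ i, ∑ j, ⟪H, h i j⟫ * h2 i j
        + 6 * ∑ i, ∑ j, (h2 i j - 2 * ⟪H, h i j⟫) ^ 2 + 40 * ∑ i, ∑ j, ⟪H, h i j⟫ ^ 2 := by
        simp only [mul_sum, ric_sq, sum_add_distrib, sum_sub_distrib]
    _ = _ := by
        simp only [h₀_sq, sum_sum_add_ite_sq, sum_sub_distrib, ← mul_sum, trace_h2, trace_Hh,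
          Fintype.card_fin, Nat.cast_ofNat]
        ring
end

section
/- With h, H, h₀ as in the context, define ⟨h⁴⟩ := ∑_{i,j,k,l} ⟪h i k, h j l⟫² and ⟨h₀⁴⟩ := ∑_{i,j,k,l} ⟪h₀ i k, h₀ j l⟫². Then ⟨h⁴⟩ = ⟨h₀⁴⟩ + 8·|H·h|² − 16·‖H‖⁴. -/
open scoped RealInnerProductSpace

set_option maxHeartbeats 3200000 in
set_option maxRecDepth 16000 in
/-- `⟨h⁴⟩ = ⟨h₀⁴⟩ + 8|H·h|² − 16‖H‖⁴` for a symmetric `F`-valued 2-tensor `h` on a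
4-dimensional index set, where `H` is the mean curvature and `h₀` the trace-free part. -/
theorem stmt_3 {F : Type*} [NormedAddCommGroup F] [InnerProductSpace ℝ F]
    (h : Fin 4 → Fin 4 → F) (hsymm : ∀ i j, h i j = h j i)
    (H : F) (hH : H = (1 / 4 : ℝ) • ∑ i : Fin 4, h i i)
    (h₀ : Fin 4 → Fin 4 → F)
    (hh₀ : ∀ i j, h₀ i j = h i j - if i = j then H else 0) :
    ∑ i : Fin 4, ∑ j : Fin 4, ∑ k : Fin 4, ∑ l : Fin 4, ⟪h i k, h j l⟫ ^ 2
      = (∑ i : Fin 4, ∑ j : Fin 4, ∑ k : Fin 4, ∑ l : Fin 4, ⟪h₀ i k, h₀ j l⟫ ^ 2)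
        + 8 * (∑ i : Fin 4, ∑ j : Fin 4, ⟪H, h i j⟫ ^ 2)
        - 16 * ‖H‖ ^ 4 := by
  have hd : ∑ i : Fin 4, h i i = (4:ℝ) • H := by
    rw [hH, smul_smul]; norm_num
  have E1 : ∑ j : Fin 4, ∑ l : Fin 4, ⟪H, h j l⟫ * (∑ i : Fin 4, ⟪h i i, h j l⟫)
      = 4 * ∑ j : Fin 4, ∑ l : Fin 4, ⟪H, h j l⟫ ^ 2 := by
    rw [Finset.mul_sum]
    refine Finset.sum_congr rfl fun j _ => ?_
    rw [Finset.mul_sum]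
    refine Finset.sum_congr rfl fun l _ => ?_
    rw [← sum_inner, hd, real_inner_smul_left]; ring
  have E2 : ∑ i : Fin 4, ∑ k : Fin 4, ⟪H, h i k⟫ * (∑ j : Fin 4, ⟪h i k, h j j⟫)
      = 4 * ∑ i : Fin 4, ∑ k : Fin 4, ⟪H, h i k⟫ ^ 2 := by
    rw [Finset.mul_sum]
    refine Finset.sum_congr rfl fun i _ => ?_
    rw [Finset.mul_sum]
    refine Finset.sum_congr rfl fun k _ => ?_
    rw [← inner_sum, hd, real_inner_smul_right, real_inner_comm]; ring
  have E3 : ∑ j : Fin 4, ∑ i : Fin 4, ⟪h i i, h j j⟫ = 16 * ‖H‖ ^ 2 := by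
    have : ∀ j : Fin 4, ∑ i : Fin 4, ⟪h i i, h j j⟫ = 4 * ⟪H, h j j⟫ := fun j => by
      rw [← sum_inner, hd, real_inner_smul_left]
    simp only [this, ← Finset.mul_sum]
    rw [← inner_sum, hd, real_inner_smul_right, real_inner_self_eq_norm_sq]; ring
  have E4 : ∑ i : Fin 4, ⟪H, h i i⟫ = 4 * ‖H‖ ^ 2 := by
    rw [← inner_sum, hd, real_inner_smul_right, real_inner_self_eq_norm_sq]
  have iteL : ∀ (p : Prop) [Decidable p] (x : F),
      ⟪(if p then H else 0 : F), x⟫ = if p then ⟪H, x⟫ else 0 := by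
    intros p _ x; split_ifs <;> simp
  have iteR : ∀ (p : Prop) [Decidable p] (x : F),
      ⟪x, (if p then H else 0 : F)⟫ = if p then ⟪x, H⟫ else 0 := by
    intros p _ x; split_ifs <;> simp
  have comm : ∀ a b : Fin 4, ⟪h a b, H⟫ = ⟪H, h a b⟫ := fun a b => real_inner_comm _ _
  have hHH : ⟪H, H⟫ = ‖H‖ ^ 2 := real_inner_self_eq_norm_sq H
  simp only [hh₀]
  simp only [inner_sub_left, inner_sub_right]
  simp only [iteL, iteR]
  simp only [comm, hHH]
  simp only [Fin.sum_univ_four] at E1 E2 E3 E4 ⊢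
  simp only [Fin.reduceEq, reduceIte]
  linear_combination 2*E1 + 2*E2 - 2*‖H‖^2*E3
    + (8*‖H‖^2 - 2*(⟪H, h 0 0⟫ + ⟪H, h 1 1⟫ + ⟪H, h 2 2⟫ + ⟪H, h 3 3⟫))*E4
end

section
/- With h, H, h₀, Rm, Ric, R, P, W and the Kulkarni–Nomizu product as in the context, the Weyl tensor admits the following extrinsic expression purely in terms of the trace-free tensor h₀: for all i, j, k, l, W i j k l = ⟪h₀ i k, h₀ j l⟫ − ⟪h₀ i l, h₀ j k⟫ + (1/2)·((h₀²) ⧀ δ) i j k l − (1/12)·|h₀|²·(δ ⧀ δ) i j k l, where δ is the Kronecker delta. -/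
open scoped RealInnerProductSpace

/-- Extrinsic expression of the Weyl tensor purely in terms of the trace-free second
fundamental form: `W ijkl = ⟪h₀ik,h₀jl⟫ − ⟪h₀il,h₀jk⟫ + ½((h₀²)⧀δ)ijkl − (1/12)|h₀|²(δ⧀δ)ijkl`. -/
theorem stmt_4 {F : Type*} [NormedAddCommGroup F] [InnerProductSpace ℝ F]
    (h : Fin 4 → Fin 4 → F) (hsymm : ∀ i j, h i j = h j i)
    (H : F) (hH : H = (1 / 4 : ℝ) • ∑ i : Fin 4, h i i)
    (h₀ : Fin 4 → Fin 4 → F)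
    (hh₀ : ∀ i j, h₀ i j = h i j - if i = j then H else 0)
    (h2 : Fin 4 → Fin 4 → ℝ)
    (hh2 : ∀ i j, h2 i j = ∑ k : Fin 4, ⟪h i k, h k j⟫)
    (h₀2 : Fin 4 → Fin 4 → ℝ)
    (hh₀2 : ∀ i j, h₀2 i j = ∑ k : Fin 4, ⟪h₀ i k, h₀ k j⟫)
    (Rm : Fin 4 → Fin 4 → Fin 4 → Fin 4 → ℝ)
    (hRm : ∀ i j k l, Rm i j k l = ⟪h i k, h j l⟫ - ⟪h i l, h j k⟫)
    (Ric : Fin 4 → Fin 4 → ℝ)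
    (hRic : ∀ i k, Ric i k = 4 * ⟪H, h i k⟫ - h2 i k)
    (R : ℝ) (hR : R = 16 * ‖H‖ ^ 2 - ∑ i : Fin 4, ∑ j : Fin 4, ‖h i j‖ ^ 2)
    (δ : Fin 4 → Fin 4 → ℝ) (hδ : ∀ i j, δ i j = if i = j then 1 else 0)
    (P : Fin 4 → Fin 4 → ℝ) (hP : ∀ i j, P i j = Ric i j - (R / 6) * δ i j)
    (KN : (Fin 4 → Fin 4 → ℝ) → (Fin 4 → Fin 4 → ℝ) → Fin 4 → Fin 4 → Fin 4 → Fin 4 → ℝ)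
    (hKN : ∀ A B i j k l, KN A B i j k l
      = A i k * B j l + A j l * B i k - A i l * B j k - A j k * B i l)
    (W : Fin 4 → Fin 4 → Fin 4 → Fin 4 → ℝ)
    (hW : ∀ i j k l, W i j k l = Rm i j k l - (1 / 2) * KN P δ i j k l) :
    ∀ i j k l, W i j k l
      = ⟪h₀ i k, h₀ j l⟫ - ⟪h₀ i l, h₀ j k⟫
        + (1 / 2) * KN h₀2 δ i j k l
        - (1 / 12) * (∑ a : Fin 4, ∑ b : Fin 4, ‖h₀ a b‖ ^ 2) * KN δ δ i j k l := by
  have e1 : ∀ a b c d : Fin 4, ⟪h₀ a b, h₀ c d⟫ = ⟪h a b, h c d⟫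
      - (if a = b then ⟪H, h c d⟫ else 0) - (if c = d then ⟪H, h a b⟫ else 0)
      + (if a = b then 1 else 0) * (if c = d then 1 else 0) * ‖H‖ ^ 2 := by
    intro a b c d
    rw [hh₀, hh₀]
    split_ifs <;>
      simp [inner_sub_left, inner_sub_right, real_inner_self_eq_norm_sq,
        real_inner_comm (h a b) H] <;> ring
  have e2 : ∀ a b : Fin 4, h₀2 a b = h2 a b - 2 * ⟪H, h a b⟫
      + (if a = b then 1 else 0) * ‖H‖ ^ 2 := by
    intro a b
    rw [hh₀2, hh2]
    simp only [e1, Finset.sum_add_distrib, Finset.sum_sub_distrib, Finset.sum_ite_eq,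
      Finset.sum_ite_eq', Finset.mem_univ, if_true, ite_mul, one_mul, zero_mul, mul_ite,
      mul_zero, mul_one]
    split_ifs with hab
    · subst hab; simp; ring
    · simp [hab]; ring
  have e3 : (∑ a : Fin 4, ∑ b : Fin 4, ‖h₀ a b‖ ^ 2)
      = (∑ i : Fin 4, ∑ j : Fin 4, ‖h i j‖ ^ 2) - 4 * ‖H‖ ^ 2 := by
    have hsum : ∑ i : Fin 4, h i i = (4 : ℝ) • H := by
      rw [hH, smul_smul]; norm_num
    have key : ∑ a : Fin 4, ⟪H, h a a⟫ = 4 * ‖H‖ ^ 2 := by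
      rw [← inner_sum, hsum, real_inner_smul_right, real_inner_self_eq_norm_sq]
    have e : ∀ a b : Fin 4, ‖h₀ a b‖ ^ 2 = ‖h a b‖ ^ 2
        - 2 * (if a = b then ⟪H, h a b⟫ else 0)
        + (if a = b then 1 else 0) * ‖H‖ ^ 2 := by
      intro a b
      have := e1 a b a b
      rw [real_inner_self_eq_norm_sq, real_inner_self_eq_norm_sq] at this
      rw [this]; split_ifs <;> ring
    rw [Fin.sum_univ_four] at key
    simp only [e, Fin.sum_univ_four]
    simp only [show ((0:Fin 4)=0)=True from by decide, show ((0:Fin 4)=1)=False from by decide, show ((0:Fin 4)=2)=False from by decide, show ((0:Fin 4)=3)=False from by decide, show ((1:Fin 4)=0)=False from by decide, show ((1:Fin 4)=1)=True from by decide, show ((1:Fin 4)=2)=False from by decide, show ((1:Fin 4)=3)=False from by decide, show ((2:Fin 4)=0)=False from by decide, show ((2:Fin 4)=1)=False from by decide, show ((2:Fin 4)=2)=True from by decide, show ((2:Fin 4)=3)=False from by decide, show ((3:Fin 4)=0)=False from by decide, show ((3:Fin 4)=1)=False from by decide, show ((3:Fin 4)=2)=False from by decide, show ((3:Fin 4)=3)=True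 from by decide, if_false, if_true]
    linarith
  intro i j k l
  rw [hW, hRm, hKN, hKN, hKN, hP, hP, hP, hP, hRic, hRic, hRic, hRic, hR,
    e1, e1, e2, e2, e2, e2, e3, hδ i k, hδ j l, hδ i l, hδ j k]
  split_ifs <;> first | ring | omega
end

section
/- With h, H, h₀, Rm, Ric, R, P, W as in the context, defining |W|² := ∑_{i,j,k,l} (W i j k l)², ⟨h₀⁴⟩ := ∑_{i,j,k,l} ⟪h₀ i k, h₀ j l⟫², Tr(h₀⁴) := ∑_{i,j,k,l} ⟪h₀ i j, h₀ k l⟫ · ⟪h₀ i l, h₀ k j⟫, and |h₀²|² := ∑_{i,j} ((h₀²) i j)², one has the identity |W|² = 2·⟨h₀⁴⟩ − 2·Tr(h₀⁴) − 2·|h₀²|² + (1/3)·(|h₀|²)². -/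
open scoped RealInnerProductSpace

set_option maxHeartbeats 40000000 in
/-- `|W|² = 2⟨h₀⁴⟩ − 2 Tr(h₀⁴) − 2|h₀²|² + (1/3)(|h₀|²)²` for the Weyl tensor of a
4-dimensional submanifold expressed extrinsically. -/
theorem stmt_5 {F : Type*} [NormedAddCommGroup F] [InnerProductSpace ℝ F]
    (h : Fin 4 → Fin 4 → F) (hsymm : ∀ i j, h i j = h j i)
    (H : F) (hH : H = (1 / 4 : ℝ) • ∑ i : Fin 4, h i i)
    (h₀ : Fin 4 → Fin 4 → F)
    (hh₀ : ∀ i j, h₀ i j = h i j - if i = j then H else 0)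
    (h2 : Fin 4 → Fin 4 → ℝ)
    (hh2 : ∀ i j, h2 i j = ∑ k : Fin 4, ⟪h i k, h k j⟫)
    (h₀2 : Fin 4 → Fin 4 → ℝ)
    (hh₀2 : ∀ i j, h₀2 i j = ∑ k : Fin 4, ⟪h₀ i k, h₀ k j⟫)
    (Rm : Fin 4 → Fin 4 → Fin 4 → Fin 4 → ℝ)
    (hRm : ∀ i j k l, Rm i j k l = ⟪h i k, h j l⟫ - ⟪h i l, h j k⟫)
    (Ric : Fin 4 → Fin 4 → ℝ)
    (hRic : ∀ i k, Ric i k = 4 * ⟪H, h i k⟫ - h2 i k)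
    (R : ℝ) (hR : R = 16 * ‖H‖ ^ 2 - ∑ i : Fin 4, ∑ j : Fin 4, ‖h i j‖ ^ 2)
    (δ : Fin 4 → Fin 4 → ℝ) (hδ : ∀ i j, δ i j = if i = j then 1 else 0)
    (P : Fin 4 → Fin 4 → ℝ) (hP : ∀ i j, P i j = Ric i j - (R / 6) * δ i j)
    (KN : (Fin 4 → Fin 4 → ℝ) → (Fin 4 → Fin 4 → ℝ) → Fin 4 → Fin 4 → Fin 4 → Fin 4 → ℝ)
    (hKN : ∀ A B i j k l, KN A B i j k l
      = A i k * B j l + A j l * B i k - A i l * B j k - A j k * B i l)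
    (W : Fin 4 → Fin 4 → Fin 4 → Fin 4 → ℝ)
    (hW : ∀ i j k l, W i j k l = Rm i j k l - (1 / 2) * KN P δ i j k l) :
    ∑ i : Fin 4, ∑ j : Fin 4, ∑ k : Fin 4, ∑ l : Fin 4, W i j k l ^ 2
      = 2 * (∑ i : Fin 4, ∑ j : Fin 4, ∑ k : Fin 4, ∑ l : Fin 4, ⟪h₀ i k, h₀ j l⟫ ^ 2)
        - 2 * (∑ i : Fin 4, ∑ j : Fin 4, ∑ k : Fin 4, ∑ l : Fin 4,
            ⟪h₀ i j, h₀ k l⟫ * ⟪h₀ i l, h₀ k j⟫)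
        - 2 * (∑ i : Fin 4, ∑ j : Fin 4, h₀2 i j ^ 2)
        + (1 / 3) * (∑ i : Fin 4, ∑ j : Fin 4, ‖h₀ i j‖ ^ 2) ^ 2 := by
  simp only [hW, hRm, hKN, hP, hRic, hh2, hR, hδ, hh₀2, hh₀, hH]
  simp only [Fin.sum_univ_four, ← real_inner_self_eq_norm_sq]
  simp only [Fin.reduceEq, reduceIte, sub_zero]
  simp only [inner_sub_left, inner_sub_right, inner_smul_left, inner_smul_right,
    inner_add_left, inner_add_right, RCLike.inner_apply, conj_trivial]
  simp only [hsymm 1 0, hsymm 2 0, hsymm 2 1, hsymm 3 0, hsymm 3 1, hsymm 3 2]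
  simp only [real_inner_comm (h 0 1) (h 0 0),
    real_inner_comm (h 0 2) (h 0 0),
    real_inner_comm (h 0 2) (h 0 1),
    real_inner_comm (h 0 3) (h 0 0),
    real_inner_comm (h 0 3) (h 0 1),
    real_inner_comm (h 0 3) (h 0 2),
    real_inner_comm (h 1 1) (h 0 0),
    real_inner_comm (h 1 1) (h 0 1),
    real_inner_comm (h 1 1) (h 0 2),
    real_inner_comm (h 1 1) (h 0 3),
    real_inner_comm (h 1 2) (h 0 0),
    real_inner_comm (h 1 2) (h 0 1),
    real_inner_comm (h 1 2) (h 0 2),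
    real_inner_comm (h 1 2) (h 0 3),
    real_inner_comm (h 1 2) (h 1 1),
    real_inner_comm (h 1 3) (h 0 0),
    real_inner_comm (h 1 3) (h 0 1),
    real_inner_comm (h 1 3) (h 0 2),
    real_inner_comm (h 1 3) (h 0 3),
    real_inner_comm (h 1 3) (h 1 1),
    real_inner_comm (h 1 3) (h 1 2),
    real_inner_comm (h 2 2) (h 0 0),
    real_inner_comm (h 2 2) (h 0 1),
    real_inner_comm (h 2 2) (h 0 2),
    real_inner_comm (h 2 2) (h 0 3),
    real_inner_comm (h 2 2) (h 1 1),
    real_inner_comm (h 2 2) (h 1 2),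
    real_inner_comm (h 2 2) (h 1 3),
    real_inner_comm (h 2 3) (h 0 0),
    real_inner_comm (h 2 3) (h 0 1),
    real_inner_comm (h 2 3) (h 0 2),
    real_inner_comm (h 2 3) (h 0 3),
    real_inner_comm (h 2 3) (h 1 1),
    real_inner_comm (h 2 3) (h 1 2),
    real_inner_comm (h 2 3) (h 1 3),
    real_inner_comm (h 2 3) (h 2 2),
    real_inner_comm (h 3 3) (h 0 0),
    real_inner_comm (h 3 3) (h 0 1),
    real_inner_comm (h 3 3) (h 0 2),
    real_inner_comm (h 3 3) (h 0 3),
    real_inner_comm (h 3 3) (h 1 1),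
    real_inner_comm (h 3 3) (h 1 2),
    real_inner_comm (h 3 3) (h 1 3),
    real_inner_comm (h 3 3) (h 2 2),
    real_inner_comm (h 3 3) (h 2 3)]
  ring
end

section
/- With e, η, ℓ, A, C, D as in the context, for every c ∈ Fin 4 one has 3·(A c) = ∑_b ⟪η b c, C b⟫ − ∑_{a,b} ⟪D a b c, η a b⟫ (this is the first structural identity relating the contractions of ℓ against dΦ). -/
/-!
Only two facts about 2-vectors enter: the pairing is bilinear, and on simple 2-vectors it is the
Gram determinant `⟪x ∧ y, u ∧ v⟫ = ⟪x, u⟫⟪y, v⟫ - ⟪x, v⟫⟪y, u⟫`. Against an orthonormal family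
`e` indexed by `N` elements every pairing then collapses to Kronecker deltas, and the antisymmetry
of `ℓ` identifies the first sum with `-A c` and the second with `(4 - 2N) A c`. Their difference is
`(2N - 5) A c`, which is `3 A c` for `N = 4`.
-/

open scoped RealInnerProductSpace Matrix

open Finset Matrix

section GramPairing

variable {E V ι : Type*} [NormedAddCommGroup E] [InnerProductSpace ℝ E] [AddCommGroup V]
  [Module ℝ V] [Fintype ι] [DecidableEq ι]
  {wedge : E → E → V} {B : V →ₗ[ℝ] V →ₗ[ℝ] ℝ} {e : ι → E} {ℓ : ι → ι → E}

lemma sum_pairing_wedge_contraction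
    (hB : ∀ x y u v, B (wedge x y) (wedge u v) = ⟪x, u⟫ * ⟪y, v⟫ - ⟪x, v⟫ * ⟪y, u⟫)
    (he : Orthonormal ℝ e) (hℓ : ∀ i j, ℓ i j = -ℓ j i) (c : ι) :
    ∑ b, B (wedge (e b) (e c)) (∑ a, wedge (ℓ a b) (e a)) = -∑ a, ⟪ℓ a c, e a⟫ := by
  have hdiag : ∀ a, ℓ a a = 0 := fun a => by
    simpa [eq_neg_iff_add_eq_zero, ← two_smul ℝ] using hℓ a a
  simp only [map_sum, hB, orthonormal_iff_ite.mp he, mul_ite, ite_mul, mul_one, one_mul, mul_zero,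
    zero_mul, sum_sub_distrib, sum_ite_eq, mem_univ, if_true, hdiag, inner_zero_right,
    sub_zero]
  simp only [hℓ c, inner_neg_right, sum_neg_distrib, real_inner_comm (e _)]

lemma sum_pairing_cyclic_wedge
    (hB : ∀ x y u v, B (wedge x y) (wedge u v) = ⟪x, u⟫ * ⟪y, v⟫ - ⟪x, v⟫ * ⟪y, u⟫)
    (he : Orthonormal ℝ e) (hℓ : ∀ i j, ℓ i j = -ℓ j i) (c : ι) :
    ∑ a, ∑ b, B (wedge (ℓ a b) (e c) + wedge (ℓ c a) (e b) + wedge (ℓ b c) (e a))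
        (wedge (e a) (e b))
      = (4 - 2 * Fintype.card ι) * ∑ a, ⟪ℓ a c, e a⟫ := by
  simp only [map_add, LinearMap.add_apply, hB, orthonormal_iff_ite.mp he, mul_ite, mul_one,
    mul_zero, sum_sub_distrib, sum_add_distrib, sum_ite_eq, sum_ite_eq', mem_univ,
    if_true, sum_const, card_univ, sum_ite_irrel, nsmul_eq_mul, hℓ c, inner_neg_left,
    sum_neg_distrib, ← mul_sum]
  ring

end GramPairing

section MatrixModel

variable {n : Type*} [Fintype n]

def wedgeMatrix (x y : EuclideanSpace ℝ n) : Matrix n n ℝ :=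
  vecMulVec x y - vecMulVec y x

noncomputable def halfTraceForm : Matrix n n ℝ →ₗ[ℝ] Matrix n n ℝ →ₗ[ℝ] ℝ :=
  LinearMap.mk₂ ℝ (fun X Y => (1 / 2) * trace (Xᵀ * Y))
    (by intros; simp only [transpose_add, add_mul, trace_add, mul_add])
    (by intros; simp only [transpose_smul, smul_mul, trace_smul, smul_eq_mul]; ring)
    (by intros; simp only [mul_add, trace_add])
    (by intros; simp only [Matrix.mul_smul, trace_smul, smul_eq_mul]; ring)

lemma halfTraceForm_apply (X Y : Matrix n n ℝ) :
    halfTraceForm X Y = (1 / 2) * trace (Xᵀ * Y) :=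
  rfl

lemma halfTraceForm_wedgeMatrix (x y u v : EuclideanSpace ℝ n) :
    halfTraceForm (wedgeMatrix x y) (wedgeMatrix u v) = ⟪x, u⟫ * ⟪y, v⟫ - ⟪x, v⟫ * ⟪y, u⟫ := by
  simp only [halfTraceForm_apply, wedgeMatrix, transpose_sub, transpose_vecMulVec, sub_mul,
    mul_sub, vecMulVec_mul_vecMulVec, trace_sub, trace_vecMulVec, dotProduct_smul, smul_eq_mul,
    EuclideanSpace.inner_eq_star_dotProduct, star_trivial, dotProduct_comm (WithLp.ofLp u),
    dotProduct_comm (WithLp.ofLp v)]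
  ring

end MatrixModel

theorem stmt_7_general (m : ℕ)
    (e : Fin 4 → EuclideanSpace ℝ (Fin m)) (he : Orthonormal ℝ e)
    (wedge : EuclideanSpace ℝ (Fin m) → EuclideanSpace ℝ (Fin m) → Matrix (Fin m) (Fin m) ℝ)
    (hwedge : ∀ x y i j, wedge x y i j = x i * y j - y i * x j)
    (ip2 : Matrix (Fin m) (Fin m) ℝ → Matrix (Fin m) (Fin m) ℝ → ℝ)
    (hip2 : ∀ X Y, ip2 X Y = (1 / 2) * Matrix.trace (Xᵀ * Y))
    (η : Fin 4 → Fin 4 → Matrix (Fin m) (Fin m) ℝ)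
    (hη : ∀ a b, η a b = wedge (e a) (e b))
    (ℓ : Fin 4 → Fin 4 → EuclideanSpace ℝ (Fin m))
    (hℓ : ∀ i j, ℓ i j = -ℓ j i)
    (A : Fin 4 → ℝ) (hA : ∀ c, A c = ∑ a : Fin 4, ⟪ℓ a c, e a⟫)
    (C : Fin 4 → Matrix (Fin m) (Fin m) ℝ)
    (hC : ∀ c, C c = ∑ a : Fin 4, wedge (ℓ a c) (e a))
    (D : Fin 4 → Fin 4 → Fin 4 → Matrix (Fin m) (Fin m) ℝ)
    (hD : ∀ a b c, D a b c = wedge (ℓ a b) (e c) + wedge (ℓ c a) (e b) + wedge (ℓ b c) (e a)) :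
    ∀ c, 3 * A c
      = (∑ b : Fin 4, ip2 (η b c) (C b)) - ∑ a : Fin 4, ∑ b : Fin 4, ip2 (D a b c) (η a b) := by
  intro c
  obtain rfl : wedge = wedgeMatrix := funext₂ fun x y => Matrix.ext (hwedge x y)
  have hip2 : ∀ X Y, ip2 X Y = halfTraceForm X Y := hip2
  simp only [hA, hη, hC, hD, hip2]
  rw [sum_pairing_wedge_contraction halfTraceForm_wedgeMatrix he hℓ,
    sum_pairing_cyclic_wedge halfTraceForm_wedgeMatrix he hℓ, Fintype.card_fin]
  ring

/-- First structural identity: `3·A c = ∑_b ⟪η b c, C b⟫ − ∑_{a,b} ⟪D a b c, η a b⟫`,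
where 2-vectors of `ℝᵐ` are represented as antisymmetric `m×m` matrices. -/
theorem stmt_7 (m : ℕ) (hm : 1 ≤ m)
    (e : Fin 4 → EuclideanSpace ℝ (Fin m)) (he : Orthonormal ℝ e)
    (wedge : EuclideanSpace ℝ (Fin m) → EuclideanSpace ℝ (Fin m) → Matrix (Fin m) (Fin m) ℝ)
    (hwedge : ∀ x y i j, wedge x y i j = x i * y j - y i * x j)
    (ip2 : Matrix (Fin m) (Fin m) ℝ → Matrix (Fin m) (Fin m) ℝ → ℝ)
    (hip2 : ∀ X Y, ip2 X Y = (1 / 2) * Matrix.trace (Xᵀ * Y))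
    (η : Fin 4 → Fin 4 → Matrix (Fin m) (Fin m) ℝ)
    (hη : ∀ a b, η a b = wedge (e a) (e b))
    (ℓ : Fin 4 → Fin 4 → EuclideanSpace ℝ (Fin m))
    (hℓ : ∀ i j, ℓ i j = -ℓ j i)
    (A : Fin 4 → ℝ) (hA : ∀ c, A c = ∑ a : Fin 4, ⟪ℓ a c, e a⟫)
    (C : Fin 4 → Matrix (Fin m) (Fin m) ℝ)
    (hC : ∀ c, C c = ∑ a : Fin 4, wedge (ℓ a c) (e a))
    (D : Fin 4 → Fin 4 → Fin 4 → Matrix (Fin m) (Fin m) ℝ)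
    (hD : ∀ a b c, D a b c = wedge (ℓ a b) (e c) + wedge (ℓ c a) (e b) + wedge (ℓ b c) (e a)) :
    ∀ c, 3 * A c
      = (∑ b : Fin 4, ip2 (η b c) (C b)) - ∑ a : Fin 4, ∑ b : Fin 4, ip2 (D a b c) (η a b) :=
  stmt_7_general m e he wedge hwedge ip2 hip2 η hη ℓ hℓ A hA C hC D hD
end

section
/- With e, η, ℓ, A, B, C, D and the contraction • as in the context, for every c ∈ Fin 4 one has −3·(C c) = ∑_b (η b c)•(C b) + ∑_{a,b} (D a b c)•(η a b) + ∑_a (A a)·(η a c) − ∑_{a,b} (B a b c)·(η a b) (this is the second structural identity relating the contractions of ℓ against dΦ). -/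
open scoped RealInnerProductSpace Matrix

set_option maxHeartbeats 2000000 in
/-- Second structural identity:
`−3·C c = ∑_b (η b c)•(C b) + ∑_{a,b} (D a b c)•(η a b) + ∑_a (A a)·(η a c) − ∑_{a,b} (B a b c)·(η a b)`. -/
theorem stmt_8 (m : ℕ) (hm : 1 ≤ m)
    (e : Fin 4 → EuclideanSpace ℝ (Fin m)) (he : Orthonormal ℝ e)
    (wedge : EuclideanSpace ℝ (Fin m) → EuclideanSpace ℝ (Fin m) → Matrix (Fin m) (Fin m) ℝ)
    (hwedge : ∀ x y i j, wedge x y i j = x i * y j - y i * x j)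
    (bullet : Matrix (Fin m) (Fin m) ℝ → Matrix (Fin m) (Fin m) ℝ → Matrix (Fin m) (Fin m) ℝ)
    (hbullet : ∀ X Y, bullet X Y = Y * X - X * Y)
    (η : Fin 4 → Fin 4 → Matrix (Fin m) (Fin m) ℝ)
    (hη : ∀ a b, η a b = wedge (e a) (e b))
    (ℓ : Fin 4 → Fin 4 → EuclideanSpace ℝ (Fin m))
    (hℓ : ∀ i j, ℓ i j = -ℓ j i)
    (A : Fin 4 → ℝ) (hA : ∀ c, A c = ∑ a : Fin 4, ⟪ℓ a c, e a⟫)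
    (B : Fin 4 → Fin 4 → Fin 4 → ℝ)
    (hB : ∀ a b c, B a b c = ⟪ℓ a b, e c⟫ + ⟪ℓ c a, e b⟫ + ⟪ℓ b c, e a⟫)
    (C : Fin 4 → Matrix (Fin m) (Fin m) ℝ)
    (hC : ∀ c, C c = ∑ a : Fin 4, wedge (ℓ a c) (e a))
    (D : Fin 4 → Fin 4 → Fin 4 → Matrix (Fin m) (Fin m) ℝ)
    (hD : ∀ a b c, D a b c = wedge (ℓ a b) (e c) + wedge (ℓ c a) (e b) + wedge (ℓ b c) (e a)) :
    ∀ c, (-3 : ℝ) • C c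
      = (∑ b : Fin 4, bullet (η b c) (C b))
        + (∑ a : Fin 4, ∑ b : Fin 4, bullet (D a b c) (η a b))
        + (∑ a : Fin 4, A a • η a c)
        - ∑ a : Fin 4, ∑ b : Fin 4, B a b c • η a b := by
  have horth : ∀ a b, (⟪e a, e b⟫ : ℝ) = if a = b then 1 else 0 := orthonormal_iff_ite.mp he
  have hwneg1 : ∀ x y, wedge (-x) y = -wedge x y := by
    intro x y; ext i j; simp [hwedge]; try ring
  have hwneg2 : ∀ x y, wedge x (-y) = -wedge x y := by
    intro x y; ext i j; simp [hwedge]; try ring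
  have hwxx : ∀ x, wedge x x = 0 := by
    intro x; ext i j; simp [hwedge, mul_comm]
  have hwzero : ∀ y, wedge 0 y = 0 := by
    intro y; ext i j; simp [hwedge]
  have la : ∀ a, ℓ a a = 0 := by
    intro a
    have h := hℓ a a
    have h2 : (2 : ℝ) • ℓ a a = 0 := by
      rw [two_smul]; nth_rewrite 1 [h]; simp
    simpa using (smul_eq_zero.mp h2).resolve_left (by norm_num)
  have hbr : ∀ X Y Z, bullet X (Y + Z) = bullet X Y + bullet X Z := by
    intro X Y Z; simp only [hbullet, mul_add, add_mul]; abel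
  have hbl : ∀ X Y Z, bullet (X + Y) Z = bullet X Z + bullet Y Z := by
    intro X Y Z; simp only [hbullet, mul_add, add_mul]; abel
  have hbw : ∀ x y u v, bullet (wedge x y) (wedge u v)
      = ⟪x,u⟫ • wedge y v - ⟪y,u⟫ • wedge x v - ⟪x,v⟫ • wedge y u + ⟪y,v⟫ • wedge x u := by
    intro x y u v
    ext i j
    simp only [hbullet, hwedge, Matrix.sub_apply, Matrix.add_apply, Matrix.smul_apply,
      Matrix.mul_apply, smul_eq_mul, PiLp.inner_apply, RCLike.inner_apply, conj_trivial,
      Finset.sum_mul]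
    rw [← Finset.sum_sub_distrib, ← Finset.sum_sub_distrib, ← Finset.sum_sub_distrib,
      ← Finset.sum_add_distrib]
    exact Finset.sum_congr rfl fun k _ => by ring
  have hswapℓ : ∀ d a b, wedge (e d) (ℓ a b) = - wedge (ℓ a b) (e d) := by
    intro d a b; ext i j; simp [hwedge]; try ring
  have hcomm : ∀ (d a b : Fin 4), (⟪e d, ℓ a b⟫ : ℝ) = ⟪ℓ a b, e d⟫ := fun d a b =>
    real_inner_comm _ _
  have l10 : ℓ 1 0 = -ℓ 0 1 := hℓ 1 0
  have l20 : ℓ 2 0 = -ℓ 0 2 := hℓ 2 0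
  have l21 : ℓ 2 1 = -ℓ 1 2 := hℓ 2 1
  have l30 : ℓ 3 0 = -ℓ 0 3 := hℓ 3 0
  have l31 : ℓ 3 1 = -ℓ 1 3 := hℓ 3 1
  have l32 : ℓ 3 2 = -ℓ 2 3 := hℓ 3 2
  have hw10 : wedge (e 1) (e 0) = -wedge (e 0) (e 1) := by ext i j; simp [hwedge]; try ring
  have hw20 : wedge (e 2) (e 0) = -wedge (e 0) (e 2) := by ext i j; simp [hwedge]; try ring
  have hw21 : wedge (e 2) (e 1) = -wedge (e 1) (e 2) := by ext i j; simp [hwedge]; try ring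
  have hw30 : wedge (e 3) (e 0) = -wedge (e 0) (e 3) := by ext i j; simp [hwedge]; try ring
  have hw31 : wedge (e 3) (e 1) = -wedge (e 1) (e 3) := by ext i j; simp [hwedge]; try ring
  have hw32 : wedge (e 3) (e 2) = -wedge (e 2) (e 3) := by ext i j; simp [hwedge]; try ring
  intro c
  have hc : c = 0 ∨ c = 1 ∨ c = 2 ∨ c = 3 := by revert c; decide
  obtain rfl | rfl | rfl | rfl := hc <;>
  · simp only [hC, hD, hA, hB, hη, Fin.sum_univ_four, la, l10, l20, l21, l30, l31, l32,
      hwneg1, hwneg2, hwzero, hwxx, hbr, hbl, hbw, horth, hswapℓ, hcomm, hw10, hw20, hw21,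
      hw30, hw31, hw32, inner_neg_left, inner_neg_right, inner_zero_left, inner_zero_right,
      Fin.isValue, Fin.reduceEq, reduceIte, if_true, if_false, one_smul, zero_smul, neg_smul,
      smul_neg, smul_zero, neg_neg, add_zero, zero_add, neg_zero, sub_zero, zero_sub]
    module
end

section
/- With e, η, ℓ, A, C and the contraction • as in the context, for every c ∈ Fin 4 one has ∑_b (η b c)•(C b) = C c + ∑_a (A a)·(η a c) + ∑_{a,b} ⟪ℓ a b, e c⟫·(η a b). -/
open scoped RealInnerProductSpace Matrix

/-- `∑_b (η b c)•(C b) = C c + ∑_a (A a)·(η a c) + ∑_{a,b} ⟪ℓ a b, e c⟫·(η a b)`. -/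
theorem stmt_9 (m : ℕ) (hm : 1 ≤ m)
    (e : Fin 4 → EuclideanSpace ℝ (Fin m)) (he : Orthonormal ℝ e)
    (wedge : EuclideanSpace ℝ (Fin m) → EuclideanSpace ℝ (Fin m) → Matrix (Fin m) (Fin m) ℝ)
    (hwedge : ∀ x y i j, wedge x y i j = x i * y j - y i * x j)
    (bullet : Matrix (Fin m) (Fin m) ℝ → Matrix (Fin m) (Fin m) ℝ → Matrix (Fin m) (Fin m) ℝ)
    (hbullet : ∀ X Y, bullet X Y = Y * X - X * Y)
    (η : Fin 4 → Fin 4 → Matrix (Fin m) (Fin m) ℝ)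
    (hη : ∀ a b, η a b = wedge (e a) (e b))
    (ℓ : Fin 4 → Fin 4 → EuclideanSpace ℝ (Fin m))
    (hℓ : ∀ i j, ℓ i j = -ℓ j i)
    (A : Fin 4 → ℝ) (hA : ∀ c, A c = ∑ a : Fin 4, ⟪ℓ a c, e a⟫)
    (C : Fin 4 → Matrix (Fin m) (Fin m) ℝ)
    (hC : ∀ c, C c = ∑ a : Fin 4, wedge (ℓ a c) (e a)) :
    ∀ c, ∑ b : Fin 4, bullet (η b c) (C b)
      = C c + (∑ a : Fin 4, A a • η a c)
        + ∑ a : Fin 4, ∑ b : Fin 4, ⟪ℓ a b, e c⟫ • η a b := by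
  -- antisymmetry of wedge
  have hwa : ∀ x y, wedge x y = - wedge y x := by
    intro x y; ext i j
    simp only [hwedge, Matrix.neg_apply]; ring
  have key : ∀ x y u v, bullet (wedge x y) (wedge u v) =
      ⟪x,u⟫ • wedge y v - ⟪y,u⟫ • wedge x v - ⟪x,v⟫ • wedge y u + ⟪y,v⟫ • wedge x u := by
    intro x y u v
    ext i j
    simp only [hbullet, hwedge, Matrix.sub_apply, Matrix.add_apply, Matrix.smul_apply,
      Matrix.mul_apply, smul_eq_mul, PiLp.inner_apply, RCLike.inner_apply, conj_trivial,
      Finset.sum_mul, Finset.mul_sum]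
    rw [← Finset.sum_sub_distrib, ← Finset.sum_sub_distrib, ← Finset.sum_sub_distrib,
      ← Finset.sum_add_distrib]
    exact Finset.sum_congr rfl fun k _ => by ring
  have hee : ∀ a b : Fin 4, ⟪e a, e b⟫ = if a = b then (1:ℝ) else 0 :=
    fun a b => orthonormal_iff_ite.mp he a b
  have hℓ0 : ∀ a, ℓ a a = 0 := by
    intro a
    have h2 : (2:ℝ) • ℓ a a = 0 := by
      rw [two_smul]; nth_rewrite 2 [hℓ a a]; simp
    have := smul_eq_zero.mp h2
    simpa using this
  have hw0 : ∀ x, wedge x 0 = 0 := by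
    intro x; ext i j; simp [hwedge]
  have hwneg : ∀ x y, wedge x (-y) = - wedge x y := by
    intro x y; ext i j
    simp only [hwedge, Matrix.neg_apply, PiLp.neg_apply]; ring
  intro c
  have step1 : ∀ b, bullet (η b c) (C b)
      = ∑ a : Fin 4, bullet (wedge (e b) (e c)) (wedge (ℓ a b) (e a)) := by
    intro b
    rw [hη, hC, hbullet, Finset.sum_mul, Matrix.mul_sum, ← Finset.sum_sub_distrib]
    exact Finset.sum_congr rfl fun a _ => (hbullet _ _).symm
  have expand : ∑ b : Fin 4, bullet (η b c) (C b)
      = (∑ b : Fin 4, ∑ a : Fin 4, ⟪e b, ℓ a b⟫ • wedge (e c) (e a))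
        - (∑ b : Fin 4, ∑ a : Fin 4, ⟪e c, ℓ a b⟫ • wedge (e b) (e a))
        - (∑ b : Fin 4, ∑ a : Fin 4, ⟪e b, e a⟫ • wedge (e c) (ℓ a b))
        + (∑ b : Fin 4, ∑ a : Fin 4, ⟪e c, e a⟫ • wedge (e b) (ℓ a b)) := by
    simp only [step1, key, Finset.sum_add_distrib, Finset.sum_sub_distrib]
  have hS3 : (∑ b : Fin 4, ∑ a : Fin 4, ⟪e b, e a⟫ • wedge (e c) (ℓ a b)) = 0 := by
    simp [hee, ite_smul, Finset.sum_ite_eq, hℓ0, hw0]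
  have hS4 : (∑ b : Fin 4, ∑ a : Fin 4, ⟪e c, e a⟫ • wedge (e b) (ℓ a b)) = C c := by
    have : ∀ b : Fin 4, (∑ a : Fin 4, ⟪e c, e a⟫ • wedge (e b) (ℓ a b))
        = wedge (ℓ b c) (e b) := by
      intro b
      rw [Finset.sum_eq_single c]
      · rw [hee]
        simp [hℓ c b, hwneg, hwa (ℓ b c) (e b)]
      · intro a _ ha
        rw [hee]
        simp [if_neg (Ne.symm ha)]
      · simp
    rw [Finset.sum_congr rfl fun b _ => this b, hC]
  have hS1 : (∑ b : Fin 4, ∑ a : Fin 4, ⟪e b, ℓ a b⟫ • wedge (e c) (e a))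
      = ∑ a : Fin 4, A a • η a c := by
    rw [Finset.sum_comm]
    refine Finset.sum_congr rfl fun a _ => ?_
    rw [← Finset.sum_smul, hA, hη, hwa (e c) (e a), Finset.sum_congr rfl
      (fun b _ => by rw [real_inner_comm, hℓ a b, inner_neg_left] : ∀ b ∈ Finset.univ,
        ⟪e b, ℓ a b⟫ = -⟪ℓ b a, e b⟫)]
    rw [Finset.sum_neg_distrib, neg_smul, smul_neg, neg_neg]
  have hS2 : (∑ b : Fin 4, ∑ a : Fin 4, ⟪e c, ℓ a b⟫ • wedge (e b) (e a))
      = - ∑ a : Fin 4, ∑ b : Fin 4, ⟪ℓ a b, e c⟫ • η a b := by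
    rw [Finset.sum_comm, ← Finset.sum_neg_distrib]
    refine Finset.sum_congr rfl fun a _ => ?_
    rw [← Finset.sum_neg_distrib]
    refine Finset.sum_congr rfl fun b _ => ?_
    rw [real_inner_comm, hη, hwa (e b) (e a), smul_neg]
  rw [expand, hS1, hS2, hS3, hS4]
  abel
end

section
/- With e, η, ℓ, A, C, D and the contraction • as in the context, for every c ∈ Fin 4 one has ∑_{a,b} (D a b c)•(η a b) = −4·(C c) − 2·∑_a (A a)·(η a c) + 2·∑_{a,b} ⟪ℓ c a, e b⟫·(η a b). -/
set_option maxHeartbeats 2000000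


open scoped RealInnerProductSpace Matrix

/-- `∑_{a,b} (D a b c)•(η a b) = −4·C c − 2·∑_a (A a)·(η a c) + 2·∑_{a,b} ⟪ℓ c a, e b⟫·(η a b)`. -/
theorem stmt_10 (m : ℕ) (hm : 1 ≤ m)
    (e : Fin 4 → EuclideanSpace ℝ (Fin m)) (he : Orthonormal ℝ e)
    (wedge : EuclideanSpace ℝ (Fin m) → EuclideanSpace ℝ (Fin m) → Matrix (Fin m) (Fin m) ℝ)
    (hwedge : ∀ x y i j, wedge x y i j = x i * y j - y i * x j)
    (bullet : Matrix (Fin m) (Fin m) ℝ → Matrix (Fin m) (Fin m) ℝ → Matrix (Fin m) (Fin m) ℝ)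
    (hbullet : ∀ X Y, bullet X Y = Y * X - X * Y)
    (η : Fin 4 → Fin 4 → Matrix (Fin m) (Fin m) ℝ)
    (hη : ∀ a b, η a b = wedge (e a) (e b))
    (ℓ : Fin 4 → Fin 4 → EuclideanSpace ℝ (Fin m))
    (hℓ : ∀ i j, ℓ i j = -ℓ j i)
    (A : Fin 4 → ℝ) (hA : ∀ c, A c = ∑ a : Fin 4, ⟪ℓ a c, e a⟫)
    (C : Fin 4 → Matrix (Fin m) (Fin m) ℝ)
    (hC : ∀ c, C c = ∑ a : Fin 4, wedge (ℓ a c) (e a))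
    (D : Fin 4 → Fin 4 → Fin 4 → Matrix (Fin m) (Fin m) ℝ)
    (hD : ∀ a b c, D a b c = wedge (ℓ a b) (e c) + wedge (ℓ c a) (e b) + wedge (ℓ b c) (e a)) :
    ∀ c, ∑ a : Fin 4, ∑ b : Fin 4, bullet (D a b c) (η a b)
      = (-4 : ℝ) • C c - (2 : ℝ) • (∑ a : Fin 4, A a • η a c)
        + (2 : ℝ) • ∑ a : Fin 4, ∑ b : Fin 4, ⟪ℓ c a, e b⟫ • η a b := by
  have key : ∀ x y u v : EuclideanSpace ℝ (Fin m),
      bullet (wedge x y) (wedge u v)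
        = ⟪x, u⟫ • wedge y v - ⟪y, u⟫ • wedge x v - ⟪x, v⟫ • wedge y u
          + ⟪y, v⟫ • wedge x u := by
    intro x y u v
    ext i j
    simp only [hbullet, Matrix.sub_apply, Matrix.add_apply, Matrix.mul_apply,
      Matrix.smul_apply, smul_eq_mul, hwedge, PiLp.inner_apply, RCLike.inner_apply,
      conj_trivial, Finset.sum_mul]
    rw [← Finset.sum_sub_distrib, ← Finset.sum_sub_distrib, ← Finset.sum_sub_distrib,
      ← Finset.sum_add_distrib]
    exact Finset.sum_congr rfl fun k _ => by ring
  have bullet_add : ∀ X Y Z, bullet (X + Y) Z = bullet X Z + bullet Y Z := by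
    intro X Y Z
    simp only [hbullet, add_mul, mul_add]
    abel
  have hz : ∀ a, ℓ a a = 0 := by
    intro a
    have h2 : (2 : ℝ) • ℓ a a = 0 := by
      rw [two_smul]; nth_rw 1 [hℓ a a]; simp
    have := smul_eq_zero.mp h2
    simpa using this
  have hinner : ∀ a b, ⟪e a, e b⟫ = if a = b then (1:ℝ) else 0 := orthonormal_iff_ite.mp he
  have wneg : ∀ x y : EuclideanSpace ℝ (Fin m), wedge (-x) y = -wedge x y := by
    intro x y; ext i j; simp [hwedge]; ring
  have wself : ∀ x : EuclideanSpace ℝ (Fin m), wedge x x = 0 := by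
    intro x; ext i j; simp [hwedge, mul_comm]
  have w0 : ∀ y : EuclideanSpace ℝ (Fin m), wedge 0 y = 0 := by
    intro y; ext i j; simp [hwedge]
  intro c
  fin_cases c <;>
  · simp only [Fin.zero_eta, Fin.mk_one, Fin.reduceFinMk]
    simp only [hD, hη, hC, hA, Fin.sum_univ_four, bullet_add, key]
    simp only [hℓ 1 0, hℓ 2 0, hℓ 2 1, hℓ 3 0, hℓ 3 1, hℓ 3 2, hz, wneg, wself, w0,
      inner_neg_left, inner_zero_left, smul_neg, neg_smul, smul_zero, zero_smul, neg_neg,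
      neg_zero, add_zero, zero_add, sub_zero, zero_sub]
    simp only [hinner, Fin.isValue, Fin.reduceEq, reduceIte, one_smul, zero_smul,
      smul_zero, add_zero, zero_add, sub_zero, zero_sub, neg_neg]
    ext i j
    simp only [Matrix.add_apply, Matrix.sub_apply, Matrix.neg_apply, Matrix.smul_apply,
      Matrix.zero_apply, smul_eq_mul, hwedge]
    ring
end

section
/- With e, η, the contraction • and the interior product ⌟ as in the context, let f : Fin 4 → Fin 4 → Fin 4 → E satisfy f a b j = −f b a j and ⟪f a b j, e k⟫ = 0 for all indices (f is antisymmetric in its first two arguments and normal-valued), and define the 2-vector-valued 2-form Rn a b := ∑ⱼ (f a b j)∧(e j). Then for every c ∈ Fin 4: ((1/2)·∑_{a,b} (η a b)•(Rn a b)) ⌟ (e c) = ∑_a (Rn a c) ⌟ (e a). -/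
/-!
For an orthonormal family `e` and vectors `g j` normal to it, the contraction formula gives
`(e a ∧ e b) • (∑ⱼ g j ∧ e j) = g a ∧ e b - g b ∧ e a`, and the interior product gives
`(∑ⱼ g j ∧ e j) ⌟ e c = -g c`. By the antisymmetry of `f` the two halves of the double sum
coincide, so the factor `1/2` cancels and both sides reduce to `-∑ₐ f a c a`.
-/

open scoped RealInnerProductSpace Matrix
open Matrix WithLp

theorem EuclideanSpace.ofLp_dotProduct_ofLp {n : Type*} [Fintype n] (x y : EuclideanSpace ℝ n) :
    ofLp x ⬝ᵥ ofLp y = ⟪x, y⟫ := by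
  rw [EuclideanSpace.inner_eq_star_dotProduct, star_trivial, dotProduct_comm]

namespace Bivector

variable {n : Type*}

def wedge (x y : EuclideanSpace ℝ n) : Matrix n n ℝ :=
  vecMulVec (ofLp x) (ofLp y) - vecMulVec (ofLp y) (ofLp x)

def interior [Fintype n] (X : Matrix n n ℝ) (c : EuclideanSpace ℝ n) : EuclideanSpace ℝ n :=
  toLp 2 (Xᵀ *ᵥ ofLp c)

lemma wedge_comm (x y : EuclideanSpace ℝ n) : wedge x y = -wedge y x := by
  simp [wedge]

lemma wedge_neg_left (x y : EuclideanSpace ℝ n) : wedge (-x) y = -wedge x y := by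
  simp only [wedge, ofLp_neg, neg_vecMulVec, vecMulVec_neg]
  abel

lemma commutator_wedge_wedge [Fintype n] (x y u v : EuclideanSpace ℝ n) :
    wedge u v * wedge x y - wedge x y * wedge u v
      = ⟪x, u⟫ • wedge y v - ⟪y, u⟫ • wedge x v - ⟪x, v⟫ • wedge y u + ⟪y, v⟫ • wedge x u := by
  simp only [wedge, sub_mul, mul_sub, vecMulVec_mul_vecMulVec, vecMulVec_smul,
    EuclideanSpace.ofLp_dotProduct_ofLp, smul_sub]
  simp only [real_inner_comm x, real_inner_comm y]
  abel

lemma interior_wedge [Fintype n] (x y c : EuclideanSpace ℝ n) :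
    interior (wedge x y) c = ⟪x, c⟫ • y - ⟪y, c⟫ • x := by
  ext i
  simp [interior, wedge, sub_mulVec, vecMulVec_mulVec, EuclideanSpace.ofLp_dotProduct_ofLp]

lemma interior_sum [Fintype n] {ι : Type*} (s : Finset ι) (X : ι → Matrix n n ℝ)
    (c : EuclideanSpace ℝ n) :
    interior (∑ i ∈ s, X i) c = ∑ i ∈ s, interior (X i) c := by
  simp [interior, transpose_sum, sum_mulVec]

section Orthonormal

variable [Fintype n] {ι : Type*} [Fintype ι] {e g : ι → EuclideanSpace ℝ n}

lemma commutator_sum_wedge_wedge (he : Orthonormal ℝ e) (hg : ∀ j k, ⟪g j, e k⟫ = 0) (a b : ι) :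
    (∑ j, wedge (g j) (e j)) * wedge (e a) (e b) - wedge (e a) (e b) * ∑ j, wedge (g j) (e j)
      = wedge (g a) (e b) - wedge (g b) (e a) := by
  classical
  simp only [Finset.sum_mul, Finset.mul_sum, ← Finset.sum_sub_distrib, commutator_wedge_wedge,
    real_inner_comm (g _), hg, orthonormal_iff_ite.mp he, zero_smul, sub_zero, zero_sub, ite_smul,
    one_smul, Finset.sum_add_distrib, Finset.sum_neg_distrib, Finset.sum_ite_eq, Finset.mem_univ,
    if_true]
  rw [wedge_comm (e b), wedge_comm (e a)]
  abel

lemma interior_sum_wedge (he : Orthonormal ℝ e) (c : ι) (hg : ∀ j, ⟪g j, e c⟫ = 0) :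
    interior (∑ j, wedge (g j) (e j)) (e c) = -g c := by
  classical
  simp only [interior_sum, interior_wedge, hg, orthonormal_iff_ite.mp he, zero_smul, zero_sub,
    ite_smul, one_smul, Finset.sum_neg_distrib, Finset.sum_ite_eq', Finset.mem_univ, if_true]

end Orthonormal

end Bivector

theorem stmt_12_general (m : ℕ)
    (e : Fin 4 → EuclideanSpace ℝ (Fin m)) (he : Orthonormal ℝ e)
    (wedge : EuclideanSpace ℝ (Fin m) → EuclideanSpace ℝ (Fin m) → Matrix (Fin m) (Fin m) ℝ)
    (hwedge : ∀ x y i j, wedge x y i j = x i * y j - y i * x j)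
    (bullet : Matrix (Fin m) (Fin m) ℝ → Matrix (Fin m) (Fin m) ℝ → Matrix (Fin m) (Fin m) ℝ)
    (hbullet : ∀ X Y, bullet X Y = Y * X - X * Y)
    (interior : Matrix (Fin m) (Fin m) ℝ → EuclideanSpace ℝ (Fin m) → EuclideanSpace ℝ (Fin m))
    (hinterior : ∀ X c i, interior X c i = ∑ j : Fin m, X j i * c j)
    (η : Fin 4 → Fin 4 → Matrix (Fin m) (Fin m) ℝ)
    (hη : ∀ a b, η a b = wedge (e a) (e b))
    (f : Fin 4 → Fin 4 → Fin 4 → EuclideanSpace ℝ (Fin m))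
    (hf_anti : ∀ a b j, f a b j = -f b a j)
    (hf_normal : ∀ a b j k, ⟪f a b j, e k⟫ = 0)
    (Rn : Fin 4 → Fin 4 → Matrix (Fin m) (Fin m) ℝ)
    (hRn : ∀ a b, Rn a b = ∑ j : Fin 4, wedge (f a b j) (e j)) :
    ∀ c, interior ((1 / 2 : ℝ) • ∑ a : Fin 4, ∑ b : Fin 4, bullet (η a b) (Rn a b)) (e c)
      = ∑ a : Fin 4, interior (Rn a c) (e a) := by
  obtain rfl : wedge = Bivector.wedge := funext₂ fun x y => Matrix.ext fun i j => by
    simp [hwedge, Bivector.wedge, vecMulVec_apply]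
  obtain rfl : interior = Bivector.interior := funext₂ fun X c => PiLp.ext fun i => by
    simp [hinterior, Bivector.interior, mulVec, dotProduct]
  intro c
  have hswap : ∑ a, ∑ b, Bivector.wedge (f a b b) (e a)
      = -∑ a, ∑ b, Bivector.wedge (f a b a) (e b) := by
    rw [Finset.sum_comm (f := fun a b => Bivector.wedge (f a b a) (e b))]
    simp only [← Finset.sum_neg_distrib, ← Bivector.wedge_neg_left, ← hf_anti]
  calc Bivector.interior ((1 / 2 : ℝ) • ∑ a, ∑ b, bullet (η a b) (Rn a b)) (e c)
      = Bivector.interior (∑ a, ∑ b, Bivector.wedge (f a b a) (e b)) (e c) := by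
        simp only [hbullet, hη, hRn, Bivector.commutator_sum_wedge_wedge he (hf_normal _ _),
          Finset.sum_sub_distrib, hswap, sub_neg_eq_add, ← two_smul ℝ, smul_smul]
        norm_num
    _ = ∑ a, -f a c a := by
        rw [Bivector.interior_sum]
        exact Finset.sum_congr rfl fun a _ =>
          Bivector.interior_sum_wedge he c fun j => hf_normal a j a c
    _ = ∑ a, Bivector.interior (Rn a c) (e a) := Finset.sum_congr rfl fun a _ => by
        rw [hRn, Bivector.interior_sum_wedge he a fun j => hf_normal a c j a]

/-- For a normal-valued 2-form `Rn a b = ∑ⱼ (f a b j)∧(e j)`, the interior contraction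
of `(1/2)·∑_{a,b} (η a b)•(Rn a b)` with `e c` equals `∑_a (Rn a c) ⌟ (e a)`. -/
theorem stmt_12 (m : ℕ) (hm : 1 ≤ m)
    (e : Fin 4 → EuclideanSpace ℝ (Fin m)) (he : Orthonormal ℝ e)
    (wedge : EuclideanSpace ℝ (Fin m) → EuclideanSpace ℝ (Fin m) → Matrix (Fin m) (Fin m) ℝ)
    (hwedge : ∀ x y i j, wedge x y i j = x i * y j - y i * x j)
    (bullet : Matrix (Fin m) (Fin m) ℝ → Matrix (Fin m) (Fin m) ℝ → Matrix (Fin m) (Fin m) ℝ)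
    (hbullet : ∀ X Y, bullet X Y = Y * X - X * Y)
    (interior : Matrix (Fin m) (Fin m) ℝ → EuclideanSpace ℝ (Fin m) → EuclideanSpace ℝ (Fin m))
    (hinterior : ∀ X c i, interior X c i = ∑ j : Fin m, X j i * c j)
    (η : Fin 4 → Fin 4 → Matrix (Fin m) (Fin m) ℝ)
    (hη : ∀ a b, η a b = wedge (e a) (e b))
    (f : Fin 4 → Fin 4 → Fin 4 → EuclideanSpace ℝ (Fin m))
    (hf_anti : ∀ a b j, f a b j = -f b a j)
    (hf_normal : ∀ a b j k, ⟪f a b j, e k⟫ = 0)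
    (Rn : Fin 4 → Fin 4 → Matrix (Fin m) (Fin m) ℝ)
    (hRn : ∀ a b, Rn a b = ∑ j : Fin 4, wedge (f a b j) (e j)) :
    ∀ c, interior ((1 / 2 : ℝ) • ∑ a : Fin 4, ∑ b : Fin 4, bullet (η a b) (Rn a b)) (e c)
      = ∑ a : Fin 4, interior (Rn a c) (e a) :=
  stmt_12_general m e he wedge hwedge bullet hbullet interior hinterior η hη f hf_anti hf_normal Rn
    hRn
end

section
/- With h, H, h₀ as in the context, set (h₀²) t i j := ∑ₖ ⟪h₀ t i k, h₀ t k j⟫, E t := ∑_{i,j} ((h₀²) t i j)², and F t r s := 2·∑_b ((h₀²) t r b)·(h₀ t s b) + 2·∑_b ((h₀²) t s b)·(h₀ t r b) − (if r = s then ∑_{i,j} ((h₀²) t i j)·(h₀ t i j) else 0). Then for every t: ∑_{r,s} ⟪h₀ t r s, (d/dt)(F t r s)⟫ = 3·(d/dt)(E t), where d/dt denotes the derivative in t. -/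
/-!
Write `a = h₀ t` (symmetric and trace-free), `b = ∂ₜa`, `q = a²` and `p = ∂ₜq = ab + ba`, all
products being taken through the inner product of `V`. The flux is bilinear in `(q, a)`, so
`∂ₜF = F(p, a) + F(q, b)`. Pairing `F(q', c)` with `a` kills the `δ`-term because `a` is
trace-free and leaves `4⟨q', ac⟩` by symmetry of `a`. Hence `∑ ⟪a, ∂ₜF⟫ = 4⟨p, q⟩ + 4⟨q, ab⟩`,
and since `⟨q, ab⟩ = ⟨q, ba⟩ = ½⟨q, p⟩` this equals `6⟨q, p⟩ = 3 ∂ₜ|q|²`.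
-/

open scoped RealInnerProductSpace

section

variable {ι : Type*} [Fintype ι] {V : Type*} [NormedAddCommGroup V] [InnerProductSpace ℝ V]

def innerMul (a b : ι → ι → V) (i j : ι) : ℝ := ∑ k, ⟪a i k, b k j⟫

def energyFlux [DecidableEq ι] (q : ι → ι → ℝ) (a : ι → ι → V) (r s : ι) : V :=
  (2 : ℝ) • (∑ c, q r c • a s c) + (2 : ℝ) • (∑ c, q s c • a r c)
    - if r = s then ∑ i, ∑ j, q i j • a i j else 0

theorem innerMul_swap {a b : ι → ι → V} (ha : ∀ i j, a i j = a j i) (hb : ∀ i j, b i j = b j i)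
    (i j : ι) : innerMul b a i j = innerMul a b j i := by
  unfold innerMul
  exact Finset.sum_congr rfl fun k _ => by rw [real_inner_comm, ha, hb]

theorem sum_mul_innerMul_swap {a b : ι → ι → V} {q : ι → ι → ℝ} (ha : ∀ i j, a i j = a j i)
    (hb : ∀ i j, b i j = b j i) (hq : ∀ i j, q i j = q j i) :
    ∑ i, ∑ j, q i j * innerMul b a i j = ∑ i, ∑ j, q i j * innerMul a b i j := by
  rw [Finset.sum_comm]
  exact Finset.sum_congr rfl fun j _ => Finset.sum_congr rfl fun i _ => by
    rw [innerMul_swap ha hb, hq]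

theorem sum_inner_energyFlux [DecidableEq ι] {a : ι → ι → V} (ha : ∀ i j, a i j = a j i)
    (htr : ∑ i, a i i = 0) (q : ι → ι → ℝ) (b : ι → ι → V) :
    ∑ r, ∑ s, ⟪a r s, energyFlux q b r s⟫ = 4 * ∑ i, ∑ j, q i j * innerMul a b i j := by
  have hdiag : ∑ r, ∑ s, ⟪a r s, if r = s then ∑ i, ∑ j, q i j • b i j else 0⟫ = 0 := by
    simp only [apply_ite (inner ℝ (a _ _)), inner_zero_right, Finset.sum_ite_eq,
      Finset.mem_univ, if_true, ← sum_inner, htr, inner_zero_left]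
  have hleft : ∑ r, ∑ s, ∑ c, q r c * ⟪a r s, b s c⟫ = ∑ i, ∑ j, q i j * innerMul a b i j := by
    refine Finset.sum_congr rfl fun r _ => ?_
    rw [Finset.sum_comm]
    simp only [innerMul, Finset.mul_sum]
  have hright : ∑ r, ∑ s, ∑ c, q s c * ⟪a r s, b r c⟫ = ∑ i, ∑ j, q i j * innerMul a b i j := by
    rw [Finset.sum_comm]
    refine Finset.sum_congr rfl fun s _ => ?_
    rw [Finset.sum_comm]
    simp only [innerMul, Finset.mul_sum, ha _ s]
  simp only [_root_.energyFlux, inner_sub_right, inner_add_right, real_inner_smul_right, inner_sum,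
    Finset.sum_sub_distrib, hdiag, sub_zero, Finset.sum_add_distrib, ← Finset.mul_sum, hleft, hright]
  ring

theorem sum_inner_energyFlux_innerMul [DecidableEq ι] {a b : ι → ι → V}
    (ha : ∀ i j, a i j = a j i) (hb : ∀ i j, b i j = b j i) (htr : ∑ i, a i i = 0) :
    ∑ r, ∑ s, ⟪a r s, energyFlux (innerMul b a + innerMul a b) a r s
        + energyFlux (innerMul a a) b r s⟫
      = 3 * (2 * ∑ i, ∑ j, innerMul a a i j * (innerMul b a + innerMul a b) i j) := by
  have hswap := sum_mul_innerMul_swap ha hb (innerMul_swap ha ha)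
  simp only [inner_add_right, Finset.sum_add_distrib, sum_inner_energyFlux ha htr, Pi.add_apply,
    add_mul, mul_add]
  simp only [mul_comm (innerMul b a _ _), mul_comm (innerMul a b _ _), hswap]
  ring

variable {a b : ℝ → ι → ι → V} {a' b' : ι → ι → V} {t : ℝ}

theorem HasDerivAt.apply₂ (ha : HasDerivAt a a' t) (i j : ι) :
    HasDerivAt (fun u => a u i j) (a' i j) t :=
  hasDerivAt_pi.1 (hasDerivAt_pi.1 ha i) j

theorem HasDerivAt.of_apply₂ (ha : ∀ i j, HasDerivAt (fun u => a u i j) (a' i j) t) :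
    HasDerivAt a a' t :=
  hasDerivAt_pi.2 fun i => hasDerivAt_pi.2 (ha i)

theorem HasDerivAt.symm_of_symm (ha : HasDerivAt a a' t) (hsymm : ∀ u i j, a u i j = a u j i)
    (i j : ι) : a' i j = a' j i := by
  have hji := ha.apply₂ j i
  simp only [← hsymm _ i j] at hji
  exact (ha.apply₂ i j).unique hji

theorem HasDerivAt.innerMul (ha : HasDerivAt a a' t) (hb : HasDerivAt b b' t) :
    HasDerivAt (fun u => innerMul (a u) (b u)) (innerMul a' (b t) + innerMul (a t) b') t :=
  .of_apply₂ fun i j => by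
    simpa only [_root_.innerMul, Pi.add_apply, ← Finset.sum_add_distrib, add_comm] using
      HasDerivAt.fun_sum fun k _ => (ha.apply₂ i k).inner ℝ (hb.apply₂ k j)

theorem HasDerivAt.energyFlux [DecidableEq ι] {q : ℝ → ι → ι → ℝ} {q' : ι → ι → ℝ}
    (hq : HasDerivAt q q' t) (ha : HasDerivAt a a' t) :
    HasDerivAt (fun u => energyFlux (q u) (a u)) (energyFlux q' (a t) + energyFlux (q t) a') t :=
  .of_apply₂ fun r s => by
    have hsum (r s : ι) := HasDerivAt.fun_sum fun c (_ : c ∈ Finset.univ) =>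
      (hq.apply₂ r c).fun_smul (ha.apply₂ s c)
    have htrace : HasDerivAt (fun u => if r = s then ∑ i, ∑ j, q u i j • a u i j else 0)
        (if r = s then ∑ i, ∑ j, (q t i j • a' i j + q' i j • a t i j) else 0) t := by
      split_ifs
      · exact HasDerivAt.fun_sum fun i _ => HasDerivAt.fun_sum fun j _ =>
          (hq.apply₂ i j).fun_smul (ha.apply₂ i j)
      · exact hasDerivAt_const t 0
    refine ((((hsum r s).fun_const_smul (2 : ℝ)).fun_add
      ((hsum s r).fun_const_smul (2 : ℝ))).fun_sub htrace).congr_deriv ?_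
    simp only [Pi.add_apply, _root_.energyFlux]
    split_ifs <;> simp only [Finset.sum_add_distrib, smul_add] <;> abel

theorem HasDerivAt.sum_sum_sq {q : ℝ → ι → ι → ℝ} {q' : ι → ι → ℝ} (hq : HasDerivAt q q' t) :
    HasDerivAt (fun u => ∑ i, ∑ j, q u i j ^ 2) (2 * ∑ i, ∑ j, q t i j * q' i j) t := by
  simpa [Finset.mul_sum, mul_assoc] using
    HasDerivAt.fun_sum fun i (_ : i ∈ Finset.univ) =>
      HasDerivAt.fun_sum fun j (_ : j ∈ Finset.univ) => (hq.apply₂ i j).fun_pow 2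

end

/-- For the energy density `E t = |h₀²|²` with flux
`F t r s = 2∑_b (h₀²)_{rb}·h₀ t s b + 2∑_b (h₀²)_{sb}·h₀ t r b − δ_{rs}·⟨h₀², h₀⟩`,
one has `∑_{r,s} ⟪h₀ t r s, ∂ₜ F t r s⟫ = 3 ∂ₜ E t`. -/
theorem stmt_17 {V : Type*} [NormedAddCommGroup V] [InnerProductSpace ℝ V]
    (h : ℝ → Fin 4 → Fin 4 → V)
    (hdiff : ∀ i j, Differentiable ℝ (fun t => h t i j))
    (hsymm : ∀ t i j, h t i j = h t j i)
    (H : ℝ → V) (hH : ∀ t, H t = (1 / 4 : ℝ) • ∑ i : Fin 4, h t i i)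
    (h₀ : ℝ → Fin 4 → Fin 4 → V)
    (hh₀ : ∀ t i j, h₀ t i j = h t i j - if i = j then H t else 0)
    (h₀2 : ℝ → Fin 4 → Fin 4 → ℝ)
    (hh₀2 : ∀ t i j, h₀2 t i j = ∑ k : Fin 4, ⟪h₀ t i k, h₀ t k j⟫)
    (E : ℝ → ℝ)
    (hE : ∀ t, E t = ∑ i : Fin 4, ∑ j : Fin 4, h₀2 t i j ^ 2)
    (F : ℝ → Fin 4 → Fin 4 → V)
    (hF : ∀ t r s, F t r s
      = (2 : ℝ) • (∑ b : Fin 4, h₀2 t r b • h₀ t s b)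
        + (2 : ℝ) • (∑ b : Fin 4, h₀2 t s b • h₀ t r b)
        - (if r = s then ∑ i : Fin 4, ∑ j : Fin 4, h₀2 t i j • h₀ t i j else 0)) :
    ∀ t, ∑ r : Fin 4, ∑ s : Fin 4, ⟪h₀ t r s, deriv (fun u => F u r s) t⟫
      = 3 * deriv E t := by
  intro t
  have hsymm₀ (u : ℝ) (i j : Fin 4) : h₀ u i j = h₀ u j i := by
    simp only [hh₀, hsymm u i j, eq_comm (a := i)]
  have htr : ∑ i, h₀ t i i = 0 := by
    simp only [hh₀, if_true, Finset.sum_sub_distrib, Finset.sum_const, Finset.card_univ,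
      Fintype.card_fin, hH]
    module
  have hdiff₀ : Differentiable ℝ h₀ := by
    have hHdiff : Differentiable ℝ H := by
      rw [funext hH]
      exact (Differentiable.fun_sum fun i _ => hdiff i i).const_smul _
    refine differentiable_pi.2 fun i => differentiable_pi.2 fun j => ?_
    simp only [hh₀]
    split_ifs
    · exact (hdiff i j).sub hHdiff
    · exact (hdiff i j).sub_const 0
  obtain ⟨b, hb⟩ : ∃ b, HasDerivAt h₀ b t := ⟨_, (hdiff₀ t).hasDerivAt⟩
  have hq₀ : h₀2 = fun u => innerMul (h₀ u) (h₀ u) := funext fun u => funext₂ (hh₀2 u)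
  have hq : HasDerivAt h₀2 (innerMul b (h₀ t) + innerMul (h₀ t) b) t := hq₀ ▸ hb.innerMul hb
  have hF' : HasDerivAt F _ t := (funext fun u => funext₂ (hF u) : F = _) ▸ hq.energyFlux hb
  have hE' : HasDerivAt E _ t := funext hE ▸ hq.sum_sum_sq
  simp only [(hF'.apply₂ _ _).deriv, hE'.deriv, Pi.add_apply, hq₀]
  exact sum_inner_energyFlux_innerMul (hsymm₀ t) (hb.symm_of_symm hsymm₀) htr
end

section
/- With h, H, h₀ as in the context, set (h₀²) t i j := ∑ₖ ⟪h₀ t i k, h₀ t k j⟫, E t := ∑_{r,s,a,b} ⟪h₀ t r a, h₀ t s b⟫·⟪h₀ t r s, h₀ t a b⟫ (the fully cyclic quartic contraction Tr(h₀⁴)), and F t r s := 4·∑_{a,b} ⟪h₀ t r a, h₀ t s b⟫·(h₀ t a b) − (if r = s then ∑_{i,j} ((h₀²) t i j)·(h₀ t i j) else 0). Then for every t: ∑_{r,s} ⟪h₀ t r s, (d/dt)(F t r s)⟫ = 3·(d/dt)(E t), where d/dt denotes the derivative in t. -/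
open scoped RealInnerProductSpace
open Finset

/-!
Write `Q(A, B, C, D) = ∑ ⟪A r a, B s b⟫ ⟪C r s, D a b⟫`, so that `E = Q(h₀, h₀, h₀, h₀)` and the
cubic part of `F` pairs with a tensor `D` to `4 Q(h₀, h₀, D, h₀)`. `Q` is invariant under exchanging
its two pairs of slots and, for symmetric arguments, under swapping the slots within a pair; these
moves are transitive on the four slots, so for symmetric `h₀` every term of the product rule equals
`q = Q(ḣ₀, h₀, h₀, h₀)`. Thus `E' = 4q`, while `∑ ⟪h₀, F'⟫` collects three of the four terms,
`4 · 3q`. The trace correction in `F` pairs to `⟪∑ h₀ r r, ·⟫ = 0`.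
-/

section

variable {ι V : Type*} [Fintype ι] [NormedAddCommGroup V] [InnerProductSpace ℝ V]

def quarticForm (A B C D : ι → ι → V) : ℝ :=
  ∑ r, ∑ s, ∑ a, ∑ b, ⟪A r a, B s b⟫ * ⟪C r s, D a b⟫

def cubicForm (A B C : ι → ι → V) (r s : ι) : V :=
  ∑ a, ∑ b, ⟪A r a, B s b⟫ • C a b

theorem sum_inner_cubicForm (A B C D : ι → ι → V) :
    ∑ r, ∑ s, ⟪D r s, cubicForm A B C r s⟫ = quarticForm A B D C := by
  simp only [cubicForm, quarticForm, inner_sum, real_inner_smul_right]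

theorem quarticForm_comm_pairs (A B C D : ι → ι → V) :
    quarticForm A B C D = quarticForm C D A B := by
  unfold quarticForm
  refine sum_congr rfl fun r _ => ?_
  rw [sum_comm]
  simp only [mul_comm]

theorem quarticForm_swap_left (A B : ι → ι → V) {C D : ι → ι → V}
    (hC : ∀ i j, C i j = C j i) (hD : ∀ i j, D i j = D j i) :
    quarticForm A B C D = quarticForm B A C D := by
  unfold quarticForm
  rw [sum_comm]
  refine sum_congr rfl fun s _ => sum_congr rfl fun r _ => ?_
  rw [sum_comm]
  refine sum_congr rfl fun b _ => sum_congr rfl fun a _ => ?_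
  rw [real_inner_comm, hC, hD]

theorem quarticForm_swap_right {A B : ι → ι → V} (C D : ι → ι → V)
    (hA : ∀ i j, A i j = A j i) (hB : ∀ i j, B i j = B j i) :
    quarticForm A B C D = quarticForm A B D C := by
  rw [quarticForm_comm_pairs, quarticForm_swap_left C D hA hB, quarticForm_comm_pairs]

theorem quarticForm_perm_of_symm {A : ι → ι → V} (hA : ∀ i j, A i j = A j i) (B : ι → ι → V) :
    quarticForm A B A A = quarticForm B A A A ∧ quarticForm A A B A = quarticForm B A A A ∧
      quarticForm A A A B = quarticForm B A A A := by
  have h₁ : quarticForm A B A A = quarticForm B A A A := quarticForm_swap_left A B hA hA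
  have h₂ : quarticForm A A B A = quarticForm B A A A := quarticForm_comm_pairs ..
  exact ⟨h₁, h₂, (quarticForm_swap_right A B hA hA).trans h₂⟩

theorem sum_inner_ite_eq [DecidableEq ι] (A : ι → ι → V) (v : V) :
    ∑ r, ∑ s, ⟪A r s, if r = s then v else 0⟫ = ⟪∑ r, A r r, v⟫ := by
  simp [apply_ite, sum_inner]

variable {A : ℝ → ι → ι → V} {A' : ι → ι → V} {t : ℝ}

theorem hasDerivAt_quarticForm (hA : ∀ i j, HasDerivAt (fun u => A u i j) (A' i j) t) :
    HasDerivAt (fun u => quarticForm (A u) (A u) (A u) (A u))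
      (quarticForm A' (A t) (A t) (A t) + quarticForm (A t) A' (A t) (A t)
        + quarticForm (A t) (A t) A' (A t) + quarticForm (A t) (A t) (A t) A') t := by
  have h := HasDerivAt.fun_sum (u := univ) fun r _ => HasDerivAt.fun_sum (u := univ) fun s _ =>
    HasDerivAt.fun_sum (u := univ) fun a _ => HasDerivAt.fun_sum (u := univ) fun b _ =>
      ((hA r a).inner ℝ (hA s b)).mul ((hA r s).inner ℝ (hA a b))
  refine h.congr_deriv ?_
  simp only [quarticForm, add_mul, mul_add, sum_add_distrib]
  ring

theorem hasDerivAt_cubicForm (hA : ∀ i j, HasDerivAt (fun u => A u i j) (A' i j) t) (r s : ι) :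
    HasDerivAt (fun u => cubicForm (A u) (A u) (A u) r s)
      (cubicForm A' (A t) (A t) r s + cubicForm (A t) A' (A t) r s
        + cubicForm (A t) (A t) A' r s) t := by
  have h := HasDerivAt.fun_sum (u := univ) fun a _ => HasDerivAt.fun_sum (u := univ) fun b _ =>
      ((hA r a).inner ℝ (hA s b)).smul (hA a b)
  refine h.congr_deriv ?_
  simp only [cubicForm, add_smul, sum_add_distrib]
  abel

theorem hasDerivAt_quarticForm_of_symm (hA : ∀ i j, HasDerivAt (fun u => A u i j) (A' i j) t)
    (hsymm : ∀ i j, A t i j = A t j i) :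
    HasDerivAt (fun u => quarticForm (A u) (A u) (A u) (A u))
      (4 * quarticForm A' (A t) (A t) (A t)) t := by
  obtain ⟨h₂, h₃, h₄⟩ := quarticForm_perm_of_symm hsymm A'
  refine (hasDerivAt_quarticForm hA).congr_deriv ?_
  rw [h₂, h₃, h₄]
  ring

theorem sum_inner_cubicForm_deriv_of_symm {A : ι → ι → V} (hA : ∀ i j, A i j = A j i)
    (A' : ι → ι → V) :
    ∑ r, ∑ s, ⟪A r s, cubicForm A' A A r s + cubicForm A A' A r s + cubicForm A A A' r s⟫
      = 3 * quarticForm A' A A A := by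
  obtain ⟨h₂, -, h₄⟩ := quarticForm_perm_of_symm hA A'
  simp only [inner_add_right, sum_add_distrib, sum_inner_cubicForm, h₂, h₄]
  ring

theorem sum_inner_deriv_smul_cubicForm_sub_ite [DecidableEq ι]
    (hA : ∀ i j, HasDerivAt (fun u => A u i j) (A' i j) t)
    (hsymm : ∀ i j, A t i j = A t j i) (htr : ∑ i, A t i i = 0)
    {S : ℝ → V} (hS : DifferentiableAt ℝ S t) (c : ℝ) :
    ∑ r, ∑ s, ⟪A t r s,
        deriv (fun u => c • cubicForm (A u) (A u) (A u) r s - if r = s then S u else 0) t⟫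
      = 3 * c * quarticForm A' (A t) (A t) (A t) := by
  have hflux : ∀ r s, HasDerivAt
      (fun u => c • cubicForm (A u) (A u) (A u) r s - if r = s then S u else 0)
      (c • (cubicForm A' (A t) (A t) r s + cubicForm (A t) A' (A t) r s
        + cubicForm (A t) (A t) A' r s) - if r = s then deriv S t else 0) t := by
    intro r s
    refine ((hasDerivAt_cubicForm hA r s).const_smul c).sub ?_
    split_ifs
    · exact hS.hasDerivAt
    · exact hasDerivAt_const t 0
  simp only [(hflux _ _).deriv, inner_sub_right, sum_sub_distrib, real_inner_smul_right,
    ← mul_sum, sum_inner_cubicForm_deriv_of_symm hsymm, sum_inner_ite_eq, htr, inner_zero_left]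
  ring

theorem sum_diag_sub_mean_eq_zero [Nonempty ι] (A : ι → ι → V) :
    ∑ i, (A i i - (Fintype.card ι : ℝ)⁻¹ • ∑ j, A j j) = 0 := by
  rw [sum_sub_distrib, sum_const, card_univ, ← Nat.cast_smul_eq_nsmul ℝ, smul_smul,
    mul_inv_cancel₀ (by positivity), one_smul, sub_self]

end

/-- For the fully cyclic quartic contraction `E t = Tr(h₀⁴)` with flux
`F t r s = 4∑_{a,b} ⟪h₀ t r a, h₀ t s b⟫·h₀ t a b − δ_{rs}·⟨h₀², h₀⟩`, one has
`∑_{r,s} ⟪h₀ t r s, ∂ₜ F t r s⟫ = 3 ∂ₜ E t`. -/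
theorem stmt_18 {V : Type*} [NormedAddCommGroup V] [InnerProductSpace ℝ V]
    (h : ℝ → Fin 4 → Fin 4 → V)
    (hdiff : ∀ i j, Differentiable ℝ (fun t => h t i j))
    (hsymm : ∀ t i j, h t i j = h t j i)
    (H : ℝ → V) (hH : ∀ t, H t = (1 / 4 : ℝ) • ∑ i : Fin 4, h t i i)
    (h₀ : ℝ → Fin 4 → Fin 4 → V)
    (hh₀ : ∀ t i j, h₀ t i j = h t i j - if i = j then H t else 0)
    (h₀2 : ℝ → Fin 4 → Fin 4 → ℝ)
    (hh₀2 : ∀ t i j, h₀2 t i j = ∑ k : Fin 4, ⟪h₀ t i k, h₀ t k j⟫)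
    (E : ℝ → ℝ)
    (hE : ∀ t, E t = ∑ r : Fin 4, ∑ s : Fin 4, ∑ a : Fin 4, ∑ b : Fin 4,
      ⟪h₀ t r a, h₀ t s b⟫ * ⟪h₀ t r s, h₀ t a b⟫)
    (F : ℝ → Fin 4 → Fin 4 → V)
    (hF : ∀ t r s, F t r s
      = (4 : ℝ) • (∑ a : Fin 4, ∑ b : Fin 4, ⟪h₀ t r a, h₀ t s b⟫ • h₀ t a b)
        - (if r = s then ∑ i : Fin 4, ∑ j : Fin 4, h₀2 t i j • h₀ t i j else 0)) :
    ∀ t, ∑ r : Fin 4, ∑ s : Fin 4, ⟪h₀ t r s, deriv (fun u => F u r s) t⟫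
      = 3 * deriv E t := by
  have hHd : Differentiable ℝ H := by
    rw [funext hH]
    fun_prop
  have hd₀ : ∀ i j, Differentiable ℝ fun u => h₀ u i j := by
    intro i j
    by_cases hij : i = j <;> simp only [hh₀, hij, if_true, if_false] <;> fun_prop
  have hS : Differentiable ℝ fun u => ∑ i, ∑ j, h₀2 u i j • h₀ u i j := by
    simp only [hh₀2]
    exact Differentiable.fun_sum fun i _ => Differentiable.fun_sum fun j _ =>
      (Differentiable.fun_sum fun k _ => (hd₀ i k).inner ℝ (hd₀ k j)).smul (hd₀ i j)
  intro t
  have hsymm₀ : ∀ i j, h₀ t i j = h₀ t j i := by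
    intro i j
    simp only [hh₀, hsymm t i j, eq_comm]
  have htr : ∑ i, h₀ t i i = 0 := by
    simpa [hh₀, hH] using sum_diag_sub_mean_eq_zero (h t)
  have hA := fun i j => (hd₀ i j t).hasDerivAt
  have hE' : E = fun u => quarticForm (h₀ u) (h₀ u) (h₀ u) (h₀ u) := funext hE
  have hF' : ∀ r s, (fun u => F u r s) = fun u => (4 : ℝ) • cubicForm (h₀ u) (h₀ u) (h₀ u) r s
      - if r = s then ∑ i, ∑ j, h₀2 u i j • h₀ u i j else 0 := fun r s => funext fun u => hF u r s
  rw [hE', (hasDerivAt_quarticForm_of_symm hA hsymm₀).deriv]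
  simp only [hF']
  rw [sum_inner_deriv_smul_cubicForm_sub_ite hA hsymm₀ htr (hS t)]
  ring
end

section
/- With h and H as in the context, let α ∈ ℝ and set E t := ∑_{i,j} ⟪H t, h t i j⟫² + α·‖H t‖⁴ and F t r s := 2·⟪H t, h t r s⟫·(H t) + (if r = s then (1/2)·∑_{i,j} ⟪H t, h t i j⟫·(h t i j) + α·‖H t‖²·(H t) else 0). Then for every t: ∑_{r,s} ⟪h t r s, (d/dt)(F t r s)⟫ = 3·(d/dt)(E t), where d/dt denotes the derivative in t. -/
open scoped RealInnerProductSpace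

/-!
With `H = ¼ ∑ᵢ hᵢᵢ`, the energy `E(h) = ∑ᵢⱼ ⟪H, hᵢⱼ⟫² + α‖H‖⁴` is a homogeneous quartic in the
tensor `h`, and `F(h)ᵣₛ` is its gradient with respect to `hᵣₛ`. Along a curve `h(t)` the chain rule
gives `E' = ∑ ⟪h', F⟫`, and Euler's identity gives `∑ ⟪h, F⟫ = 4 E`. Differentiating the latter,
`∑ ⟪h, F'⟫ = 4 E' - ∑ ⟪h', F⟫ = 3 E'`.
-/

open Finset

noncomputable section

variable {V : Type*} [NormedAddCommGroup V] [InnerProductSpace ℝ V] {ι : Type*} [Fintype ι]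

def meanCurvature (h : ι → ι → V) : V := (1 / 4 : ℝ) • ∑ i, h i i

def energy (α : ℝ) (h : ι → ι → V) : ℝ :=
  (∑ i, ∑ j, ⟪meanCurvature h, h i j⟫ ^ 2) + α * ‖meanCurvature h‖ ^ 4

theorem hasDerivAt_meanCurvature {γ : ℝ → ι → ι → V} {γ' : ι → ι → V} {t : ℝ}
    (hγ : ∀ i j, HasDerivAt (fun u => γ u i j) (γ' i j) t) :
    HasDerivAt (fun u => meanCurvature (γ u)) (meanCurvature γ') t :=
  (HasDerivAt.fun_sum fun i _ => hγ i i).const_smul _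

variable [DecidableEq ι]

def flux (α : ℝ) (h : ι → ι → V) (r s : ι) : V :=
  (2 * ⟪meanCurvature h, h r s⟫) • meanCurvature h
    + (if r = s then
        (1 / 2 : ℝ) • (∑ i, ∑ j, ⟪meanCurvature h, h i j⟫ • h i j)
          + (α * ‖meanCurvature h‖ ^ 2) • meanCurvature h
      else 0)

/-- The directional derivative of `energy α` at `h` in the direction `k`. -/
theorem sum_inner_flux (α : ℝ) (h k : ι → ι → V) :
    ∑ r, ∑ s, ⟪k r s, flux α h r s⟫
      = (∑ i, ∑ j, 2 * ⟪meanCurvature h, h i j⟫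
            * (⟪meanCurvature h, k i j⟫ + ⟪meanCurvature k, h i j⟫))
        + 4 * α * ‖meanCurvature h‖ ^ 2 * ⟪meanCurvature h, meanCurvature k⟫ := by
  simp only [flux, inner_add_right, sum_add_distrib]
  set G := (1 / 2 : ℝ) • (∑ i, ∑ j, ⟪meanCurvature h, h i j⟫ • h i j)
      + (α * ‖meanCurvature h‖ ^ 2) • meanCurvature h with hG
  have hite : ∀ r s, ⟪k r s, if r = s then G else 0⟫ = if r = s then ⟪k r s, G⟫ else 0 := by
    intro r s
    split_ifs <;> simp
  have hdiag : ∑ r, ⟪k r r, G⟫ = 4 * ⟪meanCurvature k, G⟫ := by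
    rw [meanCurvature, real_inner_smul_left, ← sum_inner]
    ring
  simp only [hite, sum_ite_eq, mem_univ, if_true, hdiag]
  simp only [hG, inner_add_right, inner_smul_right, inner_sum, real_inner_comm (k _ _),
    real_inner_comm (meanCurvature k), mul_add, mul_sum, sum_add_distrib]
  ring_nf

theorem sum_inner_flux_self (α : ℝ) (h : ι → ι → V) :
    ∑ r, ∑ s, ⟪h r s, flux α h r s⟫ = 4 * energy α h := by
  simp only [sum_inner_flux, energy, real_inner_self_eq_norm_sq, mul_add, mul_sum]
  ring_nf

theorem hasDerivAt_energy (α : ℝ) {γ : ℝ → ι → ι → V} {γ' : ι → ι → V} {t : ℝ}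
    (hγ : ∀ i j, HasDerivAt (fun u => γ u i j) (γ' i j) t) :
    HasDerivAt (fun u => energy α (γ u)) (∑ r, ∑ s, ⟪γ' r s, flux α (γ t) r s⟫) t := by
  have hH := hasDerivAt_meanCurvature hγ
  have henergy : (fun u => energy α (γ u)) = fun u =>
      (∑ i, ∑ j, ⟪meanCurvature (γ u), γ u i j⟫ ^ 2) + α * (‖meanCurvature (γ u)‖ ^ 2) ^ 2 := by
    ext u
    rw [energy, ← pow_mul]
  rw [henergy]
  refine ((HasDerivAt.fun_sum fun i _ => HasDerivAt.fun_sum fun j _ =>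
    (hH.inner ℝ (hγ i j)).pow 2).add ((hH.norm_sq.pow 2).const_mul α)).congr_deriv ?_
  rw [sum_inner_flux]
  simp only [Nat.cast_ofNat, Nat.add_one_sub_one, pow_one]
  ring_nf

theorem differentiableAt_flux (α : ℝ) {γ : ℝ → ι → ι → V} {γ' : ι → ι → V} {t : ℝ}
    (hγ : ∀ i j, HasDerivAt (fun u => γ u i j) (γ' i j) t) (r s : ι) :
    DifferentiableAt ℝ (fun u => flux α (γ u) r s) t := by
  have hγd : ∀ i j, DifferentiableAt ℝ (fun u => γ u i j) t :=
    fun i j => (hγ i j).differentiableAt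
  have hH := (hasDerivAt_meanCurvature hγ).differentiableAt
  have hinner : ∀ i j, DifferentiableAt ℝ (fun u => ⟪meanCurvature (γ u), γ u i j⟫) t :=
    fun i j => hH.inner ℝ (hγd i j)
  have hnorm := hH.norm_sq ℝ
  unfold flux
  split_ifs <;> fun_prop

theorem sum_inner_deriv_flux (α : ℝ) {γ : ℝ → ι → ι → V} {γ' : ι → ι → V} {t : ℝ}
    (hγ : ∀ i j, HasDerivAt (fun u => γ u i j) (γ' i j) t) :
    ∑ r, ∑ s, ⟪γ t r s, deriv (fun u => flux α (γ u) r s) t⟫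
      = 3 * deriv (fun u => energy α (γ u)) t := by
  have hE := hasDerivAt_energy α hγ
  have hpairing := HasDerivAt.fun_sum (u := univ) fun r _ => HasDerivAt.fun_sum (u := univ)
    fun s _ => (hγ r s).inner ℝ (differentiableAt_flux α hγ r s).hasDerivAt
  simp_rw [sum_inner_flux_self] at hpairing
  have h4E := hpairing.unique (hE.const_mul 4)
  simp only [sum_add_distrib] at h4E
  rw [hE.deriv]
  linarith

end

theorem stmt_19_general {V : Type*} [NormedAddCommGroup V] [InnerProductSpace ℝ V]
    (h : ℝ → Fin 4 → Fin 4 → V)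
    (hdiff : ∀ i j, Differentiable ℝ (fun t => h t i j))
    (H : ℝ → V) (hH : ∀ t, H t = (1 / 4 : ℝ) • ∑ i : Fin 4, h t i i)
    (α : ℝ)
    (E : ℝ → ℝ)
    (hE : ∀ t, E t = (∑ i : Fin 4, ∑ j : Fin 4, ⟪H t, h t i j⟫ ^ 2) + α * ‖H t‖ ^ 4)
    (F : ℝ → Fin 4 → Fin 4 → V)
    (hF : ∀ t r s, F t r s
      = (2 * ⟪H t, h t r s⟫) • H t
        + (if r = s then
            (1 / 2 : ℝ) • (∑ i : Fin 4, ∑ j : Fin 4, ⟪H t, h t i j⟫ • h t i j)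
              + (α * ‖H t‖ ^ 2) • H t
          else 0)) :
    ∀ t, ∑ r : Fin 4, ∑ s : Fin 4, ⟪h t r s, deriv (fun u => F u r s) t⟫
      = 3 * deriv E t := by
  obtain rfl : H = fun t => meanCurvature (h t) := funext hH
  obtain rfl : E = fun t => energy α (h t) := funext hE
  obtain rfl : F = fun t => flux α (h t) := funext fun t => funext fun r => funext (hF t r)
  exact fun t => sum_inner_deriv_flux α fun i j => (hdiff i j t).hasDerivAt

/-- For the energy density `E t = |H·h|² + α‖H‖⁴` with flux
`F t r s = 2⟪H, h t r s⟫·H + δ_{rs}·((1/2)⟨H·h, h⟩ + α‖H‖²·H)`, one has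
`∑_{r,s} ⟪h t r s, ∂ₜ F t r s⟫ = 3 ∂ₜ E t`. -/
theorem stmt_19 {V : Type*} [NormedAddCommGroup V] [InnerProductSpace ℝ V]
    (h : ℝ → Fin 4 → Fin 4 → V)
    (hdiff : ∀ i j, Differentiable ℝ (fun t => h t i j))
    (hsymm : ∀ t i j, h t i j = h t j i)
    (H : ℝ → V) (hH : ∀ t, H t = (1 / 4 : ℝ) • ∑ i : Fin 4, h t i i)
    (α : ℝ)
    (E : ℝ → ℝ)
    (hE : ∀ t, E t = (∑ i : Fin 4, ∑ j : Fin 4, ⟪H t, h t i j⟫ ^ 2) + α * ‖H t‖ ^ 4)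
    (F : ℝ → Fin 4 → Fin 4 → V)
    (hF : ∀ t r s, F t r s
      = (2 * ⟪H t, h t r s⟫) • H t
        + (if r = s then
            (1 / 2 : ℝ) • (∑ i : Fin 4, ∑ j : Fin 4, ⟪H t, h t i j⟫ • h t i j)
              + (α * ‖H t‖ ^ 2) • H t
          else 0)) :
    ∀ t, ∑ r : Fin 4, ∑ s : Fin 4, ⟪h t r s, deriv (fun u => F u r s) t⟫
      = 3 * deriv E t :=
  stmt_19_general h hdiff H hH α E hE F hF
end
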